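/- arXiv:2012.15542 — 7 statements merged into one kernel-verified Lean document; each statement's English description precedes it below -/
import Mathlib

section
/- Let J be a countable set and μ : J → 𝕂 nonzero scalars. Then the infimum over all x : J → 𝕂 with ∑_{j∈J} |x_j| = 1 of sup_{j∈J} |x_j μ_j| equals (∑_{j∈J} 1/|μ_j|)^{-1}, where the right-hand side is 0 if the sum diverges. -/
open scoped ENNReal
open Filter
open scoped NNReal

lemma nnnorm_ofReal_nnreal {𝕂 : Type*} [RCLike 𝕂] (c : ℝ≥0) : ‖((c : ℝ) : 𝕂)‖₊ = c := by
  ext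
  simp [RCLike.norm_ofReal, abs_of_nonneg c.coe_nonneg]

/-- for countable `J` and nonzero scalars `μ`, the infimum of
`sup_j |x_j μ_j|` over all `x` with `∑ |x_j| = 1` equals `(∑_j 1/|μ_j|)⁻¹`
(which is `0` if the sum diverges, by the conventions of `ℝ≥0∞`). -/
theorem stmt2 {J : Type*} [Countable J] {𝕂 : Type*} [RCLike 𝕂]
    (μ : J → 𝕂) (hμ : ∀ j, μ j ≠ 0) :
    sInf {s : ℝ≥0∞ | ∃ x : J → 𝕂, (∑' j, (‖x j‖₊ : ℝ≥0∞)) = 1 ∧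
        s = ⨆ j, (‖x j * μ j‖₊ : ℝ≥0∞)}
      = (∑' j, (‖μ j‖₊ : ℝ≥0∞)⁻¹)⁻¹ := by
  classical
  set S : ℝ≥0∞ := ∑' j, (‖μ j‖₊ : ℝ≥0∞)⁻¹ with hS
  have hμn : ∀ j, (‖μ j‖₊ : ℝ≥0∞) ≠ 0 := by
    intro j
    simp [nnnorm_eq_zero, hμ j]
  have hμt : ∀ j, (‖μ j‖₊ : ℝ≥0∞) ≠ ⊤ := fun j => ENNReal.coe_ne_top
  apply le_antisymm
  · -- upper bound: sInf ≤ S⁻¹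
    refine le_of_forall_gt_imp_ge_of_dense fun r hr => ?_
    rcases eq_or_ne r ⊤ with rfl | hrt
    · exact le_top
    have hrinv : r⁻¹ < S := by
      rw [← ENNReal.inv_lt_inv, inv_inv] at hr
      exact hr
    rw [hS, ENNReal.tsum_eq_iSup_sum, lt_iSup_iff] at hrinv
    obtain ⟨F, hF⟩ := hrinv
    have hrpos : (0 : ℝ≥0∞) < r⁻¹ := by
      simp [ENNReal.inv_pos, hrt]
    -- the sum over F as an ℝ≥0
    set T : ℝ≥0 := ∑ j ∈ F, (‖μ j‖₊)⁻¹ with hT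
    have hTcast : (T : ℝ≥0∞) = ∑ j ∈ F, (‖μ j‖₊ : ℝ≥0∞)⁻¹ := by
      rw [hT, ENNReal.coe_finset_sum]
      refine Finset.sum_congr rfl fun j _ => ?_
      rw [ENNReal.coe_inv]
      intro h
      exact hμ j (by simpa using h)
    have hTgt : r⁻¹ < (T : ℝ≥0∞) := by rw [hTcast]; exact hF
    have hT0 : T ≠ 0 := by
      intro h
      rw [h] at hTgt
      simp at hTgt
    obtain ⟨j₀, hj₀⟩ : ∃ j, j ∈ F := by
      by_contra h
      push_neg at h
      apply hT0
      rw [hT, Finset.sum_eq_zero]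
      intro j hj
      exact absurd hj (h j)
    set c : ℝ≥0 := T⁻¹ with hc
    set x : J → 𝕂 := fun j => if j ∈ F then ((c : ℝ) : 𝕂) * (μ j)⁻¹ else 0 with hx
    have hxnorm : ∀ j, (‖x j‖₊ : ℝ≥0∞) =
        if j ∈ F then (c : ℝ≥0∞) * (‖μ j‖₊ : ℝ≥0∞)⁻¹ else 0 := by
      intro j
      by_cases hj : j ∈ F
      · simp only [hx, hj, if_true, nnnorm_mul, nnnorm_inv, nnnorm_ofReal_nnreal,
          ENNReal.coe_mul]
        rw [ENNReal.coe_inv (show ‖μ j‖₊ ≠ 0 by simp [hμ j])]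
      · simp [hx, hj]
    have hxμ : ∀ j, (‖x j * μ j‖₊ : ℝ≥0∞) = if j ∈ F then (c : ℝ≥0∞) else 0 := by
      intro j
      by_cases hj : j ∈ F
      · simp only [hx, hj, if_true]
        rw [mul_assoc, inv_mul_cancel₀ (hμ j), mul_one, nnnorm_ofReal_nnreal]
      · simp [hx, hj]
    have hsum : (∑' j, (‖x j‖₊ : ℝ≥0∞)) = 1 := by
      rw [tsum_eq_sum (s := F) (by intro j hj; rw [hxnorm j, if_neg hj])]
      have : ∑ j ∈ F, (‖x j‖₊ : ℝ≥0∞) = ∑ j ∈ F, (c : ℝ≥0∞) * (‖μ j‖₊ : ℝ≥0∞)⁻¹ := by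
        refine Finset.sum_congr rfl fun j hj => by rw [hxnorm j, if_pos hj]
      rw [this, ← Finset.mul_sum, ← hTcast, hc, ENNReal.coe_inv hT0,
        ENNReal.inv_mul_cancel (by simpa using hT0) ENNReal.coe_ne_top]
    have hsup : (⨆ j, (‖x j * μ j‖₊ : ℝ≥0∞)) = (c : ℝ≥0∞) := by
      apply le_antisymm
      · refine iSup_le fun j => ?_
        rw [hxμ j]
        split <;> simp
      · have := le_iSup (fun j => (‖x j * μ j‖₊ : ℝ≥0∞)) j₀
        rwa [hxμ j₀, if_pos hj₀] at this
    have hmem : (c : ℝ≥0∞) ∈ {s : ℝ≥0∞ | ∃ x : J → 𝕂, (∑' j, (‖x j‖₊ : ℝ≥0∞)) = 1 ∧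
        s = ⨆ j, (‖x j * μ j‖₊ : ℝ≥0∞)} := ⟨x, hsum, hsup.symm⟩
    refine (sInf_le hmem).trans ?_
    have : (c : ℝ≥0∞) = ((T : ℝ≥0∞))⁻¹ := by rw [hc, ENNReal.coe_inv hT0]
    rw [this]
    calc ((T : ℝ≥0∞))⁻¹ ≤ (r⁻¹)⁻¹ := ENNReal.inv_le_inv.mpr hTgt.le
      _ = r := inv_inv r
  · -- lower bound
    refine le_sInf fun s hs => ?_
    obtain ⟨x, hx1, rfl⟩ := hs
    set t : ℝ≥0∞ := ⨆ j, (‖x j * μ j‖₊ : ℝ≥0∞) with ht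
    have key : (1 : ℝ≥0∞) ≤ t * S := by
      calc (1 : ℝ≥0∞) = ∑' j, (‖x j‖₊ : ℝ≥0∞) := hx1.symm
        _ ≤ ∑' j, t * (‖μ j‖₊ : ℝ≥0∞)⁻¹ := by
            refine ENNReal.tsum_le_tsum fun j => ?_
            have h1 : (‖x j‖₊ : ℝ≥0∞) = (‖x j * μ j‖₊ : ℝ≥0∞) * (‖μ j‖₊ : ℝ≥0∞)⁻¹ := by
              rw [nnnorm_mul, ENNReal.coe_mul, mul_assoc,
                ENNReal.mul_inv_cancel (hμn j) (hμt j), mul_one]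
            rw [h1]
            exact mul_le_mul_left (le_iSup (fun j => (‖x j * μ j‖₊ : ℝ≥0∞)) j) _
        _ = t * S := by rw [ENNReal.tsum_mul_left]
    rcases eq_or_ne S ⊤ with hStop | hStop
    · rw [hStop]
      simp
    have hS0 : S ≠ 0 := by
      intro h
      rw [h, mul_zero] at key
      exact absurd key (by simp)
    rw [ENNReal.inv_le_iff_le_mul (fun _ => hS0) (fun h => absurd h hStop), mul_comm]
    exact key
end

section
/- Let (V,E) be a directed tree, λ and μ weights on V, and 1 ≤ p < ∞. The weighted forward shift S_λ, defined by (S_λ f)(v) = λ_v f(par(v)) for v ≠ root and (S_λ f)(root) = 0, is a bounded operator on ℓ^p(V,μ) if and only if there is M > 0 such that for all v ∈ V, ∑_{u ∈ Chi(v)} |λ_u μ_u|^p ≤ M |μ_v|^p. In that case ‖S_λ‖ = sup_{v∈V} (1/|μ_v|) (∑_{u∈Chi(v)} |λ_u μ_u|^p)^{1/p}. -/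
open scoped ENNReal
open Filter

/-- Iterated parent map of a partially defined parent function. -/
def parIter {V : Type*} (par : V → Option V) : ℕ → V → Option V
  | 0, v => some v
  | n + 1, v => (par v).bind (parIter par n)

/-- A directed tree: each vertex has at most one parent (the map `par`),
the graph is connected (any two vertices have a common ancestor), and has no cycles. -/
structure DirTree (V : Type*) : Type _ where
  par : V → Option V
  connected : ∀ u v : V, ∃ m n : ℕ, ∃ w : V,
    parIter par m u = some w ∧ parIter par n v = some w
  acyclic : ∀ (v : V) (n : ℕ), parIter par (n + 1) v ≠ some v

namespace DirTree

variable {V : Type*} (t : DirTree V)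

/-- The set of children of a vertex. -/
def children (v : V) : Set V := {u | t.par u = some v}

/-- `desc n v` is `Chi^n(v)`, the set of `n`-th generation descendants of `v`. -/
def desc (n : ℕ) (v : V) : Set V := {u | parIter t.par n u = some v}

def IsRoot (v : V) : Prop := t.par v = none

def Rooted : Prop := ∃ v, t.IsRoot v

def Unrooted : Prop := ∀ v : V, t.par v ≠ none

/-- The tree has no leaves: every vertex has a child. -/
def Leafless : Prop := ∀ v : V, ∃ u, t.par u = some v

variable {𝕂 : Type*} [RCLike 𝕂]

/-- The weighted backward shift `B_λ`: `(B_λ f)(v) = ∑_{u ∈ Chi(v)} λ_u f(u)`. -/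
noncomputable def bshift (lam : V → 𝕂) (f : V → 𝕂) : V → 𝕂 :=
  fun v => ∑' u : t.children v, lam u * f u

/-- The weighted forward shift `S_λ`: `(S_λ f)(v) = λ_v f(par v)` for `v ≠ root`, `0` at the root. -/
noncomputable def fshift (lam : V → 𝕂) (f : V → 𝕂) : V → 𝕂 :=
  fun v => (t.par v).elim 0 (fun w => lam v * f w)

/-- `wprod lam n u = λ(par^n(u) → u)`, the product of the weights along the branch
from `par^n(u)` down to `u`. -/
noncomputable def wprod (lam : V → 𝕂) (n : ℕ) (u : V) : 𝕂 :=
  ∏ k ∈ Finset.range n, ((parIter t.par k u).elim 1 lam)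

end DirTree

/-- The `ℓ^p(V,μ)`-norm (with values in `ℝ≥0∞`): for `p = ∞` the weighted sup norm,
otherwise `(∑_v ‖f(v) μ_v‖^p)^{1/p}`. -/
noncomputable def enormW {V 𝕂 : Type*} [RCLike 𝕂] (μ : V → 𝕂) (p : ℝ≥0∞) (f : V → 𝕂) :
    ℝ≥0∞ :=
  if p = ∞ then ⨆ v, (‖μ v * f v‖₊ : ℝ≥0∞)
  else (∑' v, (‖μ v * f v‖₊ : ℝ≥0∞) ^ p.toReal) ^ (1 / p.toReal)

/-- Membership in `ℓ^p(V,μ)`. -/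
def MemWLp {V 𝕂 : Type*} [RCLike 𝕂] (μ : V → 𝕂) (p : ℝ≥0∞) (f : V → 𝕂) : Prop :=
  enormW μ p f ≠ ∞

/-- Membership in `c₀(V,μ)`: the weighted function vanishes at infinity. -/
def MemC0 {V 𝕂 : Type*} [RCLike 𝕂] (μ : V → 𝕂) (f : V → 𝕂) : Prop :=
  Tendsto (fun v => ‖μ v * f v‖) cofinite (nhds 0)

/-- `T` is a bounded operator with respect to the norm `nrm`. -/
def BoundedOn {V 𝕂 : Type*} [RCLike 𝕂] (T : (V → 𝕂) → (V → 𝕂))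
    (nrm : (V → 𝕂) → ℝ≥0∞) : Prop :=
  ∃ C : ℝ≥0∞, C ≠ ∞ ∧ ∀ f, nrm (T f) ≤ C * nrm f

/-- The operator norm of `T` with respect to the norm `nrm`. -/
noncomputable def opNorm {V 𝕂 : Type*} [RCLike 𝕂] (T : (V → 𝕂) → (V → 𝕂))
    (nrm : (V → 𝕂) → ℝ≥0∞) : ℝ≥0∞ :=
  sInf {C : ℝ≥0∞ | ∀ f, nrm (T f) ≤ C * nrm f}

/-- `T` is hypercyclic on the space `{f | mem f}` with metric induced by `nrm`:
some `f` in the space has dense orbit. -/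
def HypercyclicOn {V 𝕂 : Type*} [RCLike 𝕂] (T : (V → 𝕂) → (V → 𝕂))
    (mem : (V → 𝕂) → Prop) (nrm : (V → 𝕂) → ℝ≥0∞) : Prop :=
  ∃ f, mem f ∧ ∀ g, mem g → ∀ ε : ℝ≥0∞, 0 < ε → ∃ n : ℕ, nrm (T^[n] f - g) < ε

/-- `T` is weakly mixing: `T ⊕ T` is hypercyclic on the product. -/
def WeaklyMixingOn {V 𝕂 : Type*} [RCLike 𝕂] (T : (V → 𝕂) → (V → 𝕂))
    (mem : (V → 𝕂) → Prop) (nrm : (V → 𝕂) → ℝ≥0∞) : Prop :=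
  ∃ f₁ f₂, mem f₁ ∧ mem f₂ ∧ ∀ g₁ g₂, mem g₁ → mem g₂ → ∀ ε : ℝ≥0∞, 0 < ε →
    ∃ n : ℕ, nrm (T^[n] f₁ - g₁) < ε ∧ nrm (T^[n] f₂ - g₂) < ε

/-- `T` is (topologically) mixing on the space `{f | mem f}`. -/
def MixingOn {V 𝕂 : Type*} [RCLike 𝕂] (T : (V → 𝕂) → (V → 𝕂))
    (mem : (V → 𝕂) → Prop) (nrm : (V → 𝕂) → ℝ≥0∞) : Prop :=
  ∀ f g, mem f → mem g → ∀ ε : ℝ≥0∞, 0 < ε →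
    ∃ N : ℕ, ∀ n ≥ N, ∃ h, mem h ∧ nrm (h - f) < ε ∧ nrm (T^[n] h - g) < ε

/-! Grouping the vertices by their parent, the `q`-th power (`q = p.toReal`) of the norm of
`S_λ f` is `∑_w c_w |f w|^q` with `c_w = ∑_{u ∈ Chi(w)} |λ_u μ_u|^q`, while that of `C • f` is
`∑_w C^q |μ_w|^q |f w|^q`. Testing on indicator functions, the first is dominated by the second
for every `f` iff `c_w ≤ C^q |μ_w|^q` for every `w`. So the admissible constants `C` are exactly
those above `sup_w |μ_w|⁻¹ c_w^{1/q}`, which gives both the criterion and the norm. -/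

theorem ENNReal.exists_ne_top_rpow_mul_le_iff_exists_ofReal_mul_le {ι : Type*}
    {a b : ι → ℝ≥0∞} {q : ℝ} (hq : 0 < q) :
    (∃ C : ℝ≥0∞, C ≠ ∞ ∧ ∀ i, a i ≤ C ^ q * b i) ↔
      ∃ M : ℝ, 0 < M ∧ ∀ i, a i ≤ ENNReal.ofReal M * b i := by
  constructor
  · rintro ⟨C, hC, h⟩
    refine ⟨max 1 (C ^ q).toReal, by positivity, fun i => (h i).trans ?_⟩
    gcongr
    calc C ^ q = ENNReal.ofReal (C ^ q).toReal :=
          (ENNReal.ofReal_toReal (ENNReal.rpow_ne_top_of_nonneg hq.le hC)).symm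
      _ ≤ ENNReal.ofReal (max 1 (C ^ q).toReal) := ENNReal.ofReal_le_ofReal (le_max_right _ _)
  · rintro ⟨M, -, h⟩
    refine ⟨ENNReal.ofReal M ^ q⁻¹,
      ENNReal.rpow_ne_top_of_nonneg (inv_nonneg.2 hq.le) ENNReal.ofReal_ne_top, fun i => ?_⟩
    rw [← ENNReal.rpow_mul, inv_mul_cancel₀ hq.ne', ENNReal.rpow_one]
    exact h i

theorem ENNReal.le_rpow_mul_rpow_iff_inv_mul_rpow_le {a b C : ℝ≥0∞} {q : ℝ} (hq : 0 < q)
    (hb₀ : b ≠ 0) (hb : b ≠ ∞) : a ≤ C ^ q * b ^ q ↔ b⁻¹ * a ^ (1 / q) ≤ C := by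
  rw [← ENNReal.mul_rpow_of_nonneg _ _ hq.le, one_div, ← ENNReal.rpow_inv_le_iff hq,
    ENNReal.inv_mul_le_iff hb₀ hb, mul_comm]

theorem tsum_mul_nnnorm_rpow_le_iff {V 𝕂 : Type*} [RCLike 𝕂] {a b : V → ℝ≥0∞} {q : ℝ}
    (hq : 0 < q) :
    (∀ f : V → 𝕂, ∑' v, a v * (‖f v‖₊ : ℝ≥0∞) ^ q ≤ ∑' v, b v * (‖f v‖₊ : ℝ≥0∞) ^ q) ↔
      ∀ v, a v ≤ b v := by
  classical
  have hsingle : ∀ (c : V → ℝ≥0∞) (w : V),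
      ∑' v, c v * (‖(Pi.single w 1 : V → 𝕂) v‖₊ : ℝ≥0∞) ^ q = c w := fun c w => by
    rw [tsum_eq_single w fun v hv => by
      simp [hv, ENNReal.zero_rpow_of_pos hq]]
    simp
  refine ⟨fun h w => ?_, fun h f => ENNReal.tsum_le_tsum fun v => by gcongr; exact h v⟩
  simpa only [hsingle] using h (Pi.single w 1)

theorem enormW_rpow_toReal {V 𝕂 : Type*} [RCLike 𝕂] (μ f : V → 𝕂) {p : ℝ≥0∞} (hp₀ : p ≠ 0)
    (hp : p ≠ ∞) : enormW μ p f ^ p.toReal = ∑' v, (‖μ v * f v‖₊ : ℝ≥0∞) ^ p.toReal := by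
  rw [enormW, if_neg hp, ← ENNReal.rpow_mul, one_div_mul_cancel (ENNReal.toReal_pos hp₀ hp).ne',
    ENNReal.rpow_one]

namespace DirTree

variable {V 𝕂 : Type*} [RCLike 𝕂] (t : DirTree V)

noncomputable def childrenSum (lam μ : V → 𝕂) (q : ℝ) (v : V) : ℝ≥0∞ :=
  ∑' u : t.children v, (‖lam u.1 * μ u.1‖₊ : ℝ≥0∞) ^ q

theorem nnnorm_mul_fshift_of_par_eq {lam μ f : V → 𝕂} {v w : V} (h : t.par v = some w) :
    ‖μ v * t.fshift lam f v‖₊ = ‖lam v * μ v‖₊ * ‖f w‖₊ := by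
  rw [fshift, h, Option.elim_some, ← nnnorm_mul]
  ring_nf

theorem fshift_eq_zero_of_isRoot {lam f : V → 𝕂} {v : V} (h : t.IsRoot v) :
    t.fshift lam f v = 0 := by
  rw [fshift, h, Option.elim_none]

theorem tsum_nnnorm_mul_fshift_rpow (lam μ f : V → 𝕂) {q : ℝ} (hq : 0 < q) :
    ∑' v, (‖μ v * t.fshift lam f v‖₊ : ℝ≥0∞) ^ q
      = ∑' w, t.childrenSum lam μ q w * (‖f w‖₊ : ℝ≥0∞) ^ q := by
  set F : V → ℝ≥0∞ := fun v => (‖μ v * t.fshift lam f v‖₊ : ℝ≥0∞) ^ q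
  have hroot : ∑' u : t.par ⁻¹' {none}, F u = 0 :=
    ENNReal.tsum_eq_zero.2 fun u => by
      simp [F, t.fshift_eq_zero_of_isRoot u.2, ENNReal.zero_rpow_of_pos hq]
  rw [← ENNReal.tsum_fiberwise F t.par, ← Option.some_injective V |>.tsum_eq]
  · refine tsum_congr fun w => ?_
    rw [childrenSum, ← ENNReal.tsum_mul_right]
    refine tsum_congr fun u => ?_
    have hu : t.par u = some w := u.2
    simp only [F, t.nnnorm_mul_fshift_of_par_eq hu, ENNReal.coe_mul,
      ENNReal.mul_rpow_of_nonneg _ _ hq.le]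
  · intro o ho
    cases o with
    | none => exact absurd hroot ho
    | some w => exact ⟨w, rfl⟩

theorem enormW_fshift_le_iff {lam μ : V → 𝕂} {p : ℝ≥0∞} (hp₀ : p ≠ 0) (hp : p ≠ ∞) (C : ℝ≥0∞) :
    (∀ f, enormW μ p (t.fshift lam f) ≤ C * enormW μ p f) ↔
      ∀ v, t.childrenSum lam μ p.toReal v ≤ C ^ p.toReal * (‖μ v‖₊ : ℝ≥0∞) ^ p.toReal := by
  have hq : 0 < p.toReal := ENNReal.toReal_pos hp₀ hp
  refine (forall_congr' fun f => ?_).trans (tsum_mul_nnnorm_rpow_le_iff hq)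
  rw [← ENNReal.rpow_le_rpow_iff hq, ENNReal.mul_rpow_of_nonneg _ _ hq.le,
    enormW_rpow_toReal _ _ hp₀ hp, enormW_rpow_toReal _ _ hp₀ hp,
    t.tsum_nnnorm_mul_fshift_rpow _ _ _ hq, ← ENNReal.tsum_mul_left]
  simp only [nnnorm_mul, ENNReal.coe_mul, ENNReal.mul_rpow_of_nonneg _ _ hq.le, mul_assoc]

end DirTree

theorem stmt3_general {V : Type*} {𝕂 : Type*} [RCLike 𝕂] (t : DirTree V)
    (lam μ : V → 𝕂) (hμ : ∀ v, μ v ≠ 0)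
    (p : ℝ≥0∞) (hp : 1 ≤ p) (hp' : p ≠ ∞) :
    (BoundedOn (t.fshift lam) (enormW μ p) ↔
      ∃ M : ℝ, 0 < M ∧ ∀ v : V,
        (∑' u : t.children v, (‖lam u.1 * μ u.1‖₊ : ℝ≥0∞) ^ p.toReal)
          ≤ ENNReal.ofReal M * (‖μ v‖₊ : ℝ≥0∞) ^ p.toReal) ∧
    (BoundedOn (t.fshift lam) (enormW μ p) →
      opNorm (t.fshift lam) (enormW μ p)
        = ⨆ v : V, (‖μ v‖₊ : ℝ≥0∞)⁻¹ *
            (∑' u : t.children v, (‖lam u.1 * μ u.1‖₊ : ℝ≥0∞) ^ p.toReal)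
              ^ (1 / p.toReal)) := by
  have hp₀ : p ≠ 0 := (zero_lt_one.trans_le hp).ne'
  have hq : 0 < p.toReal := ENNReal.toReal_pos hp₀ hp'
  have hbounded : BoundedOn (t.fshift lam) (enormW μ p) ↔ ∃ C : ℝ≥0∞, C ≠ ∞ ∧
      ∀ v, t.childrenSum lam μ p.toReal v ≤ C ^ p.toReal * (‖μ v‖₊ : ℝ≥0∞) ^ p.toReal :=
    exists_congr fun C => and_congr_right fun _ => t.enormW_fshift_le_iff hp₀ hp' C
  refine ⟨hbounded.trans (ENNReal.exists_ne_top_rpow_mul_le_iff_exists_ofReal_mul_le hq),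
    fun _ => ?_⟩
  have hbounds : {C | ∀ f, enormW μ p (t.fshift lam f) ≤ C * enormW μ p f} =
      Set.Ici (⨆ v, (‖μ v‖₊ : ℝ≥0∞)⁻¹ * t.childrenSum lam μ p.toReal v ^ (1 / p.toReal)) := by
    ext C
    simp only [Set.mem_ofPred_eq, Set.mem_Ici, iSup_le_iff, t.enormW_fshift_le_iff hp₀ hp']
    exact forall_congr' fun v => ENNReal.le_rpow_mul_rpow_iff_inv_mul_rpow_le hq
      (by simpa using hμ v) ENNReal.coe_ne_top
  rw [opNorm, hbounds, csInf_Ici]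
  rfl

/-- the weighted forward shift `S_λ` is bounded on `ℓ^p(V,μ)`, `1 ≤ p < ∞`,
iff there is `M > 0` with `∑_{u ∈ Chi(v)} |λ_u μ_u|^p ≤ M |μ_v|^p` for all `v`; in that
case `‖S_λ‖ = sup_v |μ_v|⁻¹ (∑_{u ∈ Chi(v)} |λ_u μ_u|^p)^{1/p}`. -/
theorem stmt3 {V : Type*} [Countable V] {𝕂 : Type*} [RCLike 𝕂] (t : DirTree V)
    (lam μ : V → 𝕂) (hlam : ∀ v, lam v ≠ 0) (hμ : ∀ v, μ v ≠ 0)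
    (p : ℝ≥0∞) (hp : 1 ≤ p) (hp' : p ≠ ∞) :
    (BoundedOn (t.fshift lam) (enormW μ p) ↔
      ∃ M : ℝ, 0 < M ∧ ∀ v : V,
        (∑' u : t.children v, (‖lam u.1 * μ u.1‖₊ : ℝ≥0∞) ^ p.toReal)
          ≤ ENNReal.ofReal M * (‖μ v‖₊ : ℝ≥0∞) ^ p.toReal) ∧
    (BoundedOn (t.fshift lam) (enormW μ p) →
      opNorm (t.fshift lam) (enormW μ p)
        = ⨆ v : V, (‖μ v‖₊ : ℝ≥0∞)⁻¹ *
            (∑' u : t.children v, (‖lam u.1 * μ u.1‖₊ : ℝ≥0∞) ^ p.toReal)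
              ^ (1 / p.toReal)) :=
  stmt3_general t lam μ hμ p hp hp'
end

section
/- Let (V,E) be a directed tree and λ, μ weights on V. The weighted backward shift B_λ, defined by (B_λ f)(v) = ∑_{u∈Chi(v)} λ_u f(u), is a bounded operator on ℓ¹(V,μ) if and only if sup_{v≠root} |μ_{par(v)}| |λ_v / μ_v| < ∞, and in that case this supremum equals ‖B_λ‖. -/
open scoped ENNReal
open Filter

section Aux

variable {V : Type*} {𝕂 : Type*} [RCLike 𝕂]

lemma enormW_one (μ : V → 𝕂) (f : V → 𝕂) :
    enormW μ 1 f = ∑' v, (‖μ v * f v‖₊ : ℝ≥0∞) := by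
  simp [enormW]

lemma coe_nnnorm_tsum_le {ι : Type*} (g : ι → 𝕂) :
    (‖∑' i, g i‖₊ : ℝ≥0∞) ≤ ∑' i, (‖g i‖₊ : ℝ≥0∞) := by
  by_cases h : Summable fun i => ‖g i‖₊
  · calc (‖∑' i, g i‖₊ : ℝ≥0∞) ≤ (↑(∑' i, ‖g i‖₊) : ℝ≥0∞) :=
        ENNReal.coe_le_coe.mpr (nnnorm_tsum_le h)
      _ = ∑' i, (‖g i‖₊ : ℝ≥0∞) := ENNReal.coe_tsum h
  · have : (∑' i, (‖g i‖₊ : ℝ≥0∞)) = ∞ := by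
      by_contra h'
      exact h (ENNReal.tsum_coe_ne_top_iff_summable.mp h')
    simp [this]

/-- The supremum appearing in the statement. -/
noncomputable def supM (t : DirTree V) (lam μ : V → 𝕂) : ℝ≥0∞ :=
  ⨆ v : V, (t.par v).elim (0 : ℝ≥0∞)
    (fun w => (‖μ w‖₊ : ℝ≥0∞) * ((‖lam v‖₊ : ℝ≥0∞) * (‖μ v‖₊ : ℝ≥0∞)⁻¹))

lemma bound_A (t : DirTree V) (lam μ : V → 𝕂) (hμ : ∀ v, μ v ≠ 0) (f : V → 𝕂) :
    enormW μ 1 (t.bshift lam f) ≤ supM t lam μ * enormW μ 1 f := by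
  rw [enormW_one, enormW_one]
  have step1 : ∀ v : V, (‖μ v * t.bshift lam f v‖₊ : ℝ≥0∞) ≤
      ∑' (u : t.children v), (‖μ v * (lam u * f u)‖₊ : ℝ≥0∞) := by
    intro v
    calc (‖μ v * t.bshift lam f v‖₊ : ℝ≥0∞)
        = ‖μ v * ∑' (u : t.children v), lam u * f u‖₊ := rfl
      _ = ‖∑' (u : t.children v), μ v * (lam u * f u)‖₊ := by
          rw [← tsum_mul_left]
      _ ≤ ∑' (u : t.children v), (‖μ v * (lam u * f u)‖₊ : ℝ≥0∞) :=
          coe_nnnorm_tsum_le _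
  have step2 : (∑' v, ∑' (u : t.children v), (‖μ v * (lam u * f u)‖₊ : ℝ≥0∞)) ≤
      ∑' u : V, (t.par u).elim (0 : ℝ≥0∞) (fun w => (‖μ w * (lam u * f u)‖₊ : ℝ≥0∞)) := by
    rw [← ENNReal.tsum_sigma'
      (f := fun p : (Σ v : V, t.children v) => (‖μ p.1 * (lam p.2 * f p.2)‖₊ : ℝ≥0∞))]
    have hinj : Function.Injective
        (fun p : (Σ v : V, t.children v) => (p.2 : V)) := by
      rintro ⟨v, u, hu⟩ ⟨v', u', hu'⟩ h
      simp only at h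
      subst h
      have : v = v' := by
        have := hu.symm.trans hu'
        exact Option.some_injective _ this
      subst this
      rfl
    have := ENNReal.tsum_comp_le_tsum_of_injective hinj
      (fun u : V => (t.par u).elim (0 : ℝ≥0∞)
        (fun w => (‖μ w * (lam u * f u)‖₊ : ℝ≥0∞)))
    refine le_trans (le_of_eq ?_) this
    apply tsum_congr
    rintro ⟨v, u, hu⟩
    have hu' : t.par (u : V) = some v := hu
    simp [hu']
  have step3 : (∑' u : V, (t.par u).elim (0 : ℝ≥0∞)
      (fun w => (‖μ w * (lam u * f u)‖₊ : ℝ≥0∞))) ≤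
      ∑' u : V, supM t lam μ * (‖μ u * f u‖₊ : ℝ≥0∞) := by
    apply ENNReal.tsum_le_tsum
    intro u
    cases hpar : t.par u with
    | none => simp
    | some w =>
      simp only [Option.elim]
      have hc : (‖μ w‖₊ : ℝ≥0∞) * ((‖lam u‖₊ : ℝ≥0∞) * (‖μ u‖₊ : ℝ≥0∞)⁻¹) ≤
          supM t lam μ := by
        have := le_iSup (fun v : V => (t.par v).elim (0 : ℝ≥0∞)
          (fun w => (‖μ w‖₊ : ℝ≥0∞) * ((‖lam v‖₊ : ℝ≥0∞) * (‖μ v‖₊ : ℝ≥0∞)⁻¹))) u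
        rw [hpar] at this
        exact this
      have hμu : (‖μ u‖₊ : ℝ≥0∞) ≠ 0 := by
        simp [hμ u]
      have hcancel : (‖μ u‖₊ : ℝ≥0∞)⁻¹ * (‖μ u‖₊ : ℝ≥0∞) = 1 :=
        ENNReal.inv_mul_cancel hμu ENNReal.coe_ne_top
      calc (‖μ w * (lam u * f u)‖₊ : ℝ≥0∞)
          = (‖μ w‖₊ : ℝ≥0∞) * ((‖lam u‖₊ : ℝ≥0∞) * (‖μ u‖₊ : ℝ≥0∞)⁻¹) *
            (‖μ u * f u‖₊ : ℝ≥0∞) := by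
            push_cast [nnnorm_mul]
            ring_nf
            rw [mul_assoc _ ((‖μ u‖₊ : ℝ≥0∞)⁻¹), hcancel, mul_one]
        _ ≤ supM t lam μ * (‖μ u * f u‖₊ : ℝ≥0∞) :=
            mul_le_mul_left hc _
  calc (∑' v, (‖μ v * t.bshift lam f v‖₊ : ℝ≥0∞))
      ≤ ∑' v, ∑' (u : t.children v), (‖μ v * (lam u * f u)‖₊ : ℝ≥0∞) :=
        ENNReal.tsum_le_tsum step1
    _ ≤ ∑' u : V, (t.par u).elim (0 : ℝ≥0∞)
        (fun w => (‖μ w * (lam u * f u)‖₊ : ℝ≥0∞)) := step2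
    _ ≤ ∑' u : V, supM t lam μ * (‖μ u * f u‖₊ : ℝ≥0∞) := step3
    _ = supM t lam μ * ∑' u, (‖μ u * f u‖₊ : ℝ≥0∞) := ENNReal.tsum_mul_left

lemma bound_B (t : DirTree V) (lam μ : V → 𝕂) (hμ : ∀ v, μ v ≠ 0)
    (C : ℝ≥0∞) (hC : ∀ f, enormW μ 1 (t.bshift lam f) ≤ C * enormW μ 1 f) :
    supM t lam μ ≤ C := by
  classical
  apply iSup_le
  intro u
  cases hpar : t.par u with
  | none => simp
  | some w =>
    simp only [Option.elim]
    set f : V → 𝕂 := fun x => if x = u then 1 else 0 with hf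
    have hBf : ∀ v, t.bshift lam f v = if t.par u = some v then lam u else 0 := by
      intro v
      show (∑' (x : t.children v), lam x * f x) = _
      by_cases hv : t.par u = some v
      · have hu : u ∈ t.children v := hv
        rw [tsum_eq_single (⟨u, hu⟩ : t.children v), if_pos hv]
        · simp [hf]
        · rintro ⟨x, hx⟩ hne
          have : x ≠ u := by rintro rfl; exact hne rfl
          simp [hf, this]
      · rw [if_neg hv]
        have : ∀ x : t.children v, lam x * f x = 0 := by
          rintro ⟨x, hx⟩
          have : x ≠ u := by rintro rfl; exact hv hx
          simp [hf, this]
        simp [this]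
    have h1 : enormW μ 1 f = (‖μ u‖₊ : ℝ≥0∞) := by
      rw [enormW_one]
      rw [tsum_eq_single u]
      · simp [hf]
      · intro x hx
        simp [hf, hx]
    have h2 : enormW μ 1 (t.bshift lam f) = (‖μ w‖₊ : ℝ≥0∞) * (‖lam u‖₊ : ℝ≥0∞) := by
      rw [enormW_one]
      rw [tsum_eq_single w]
      · rw [hBf w, if_pos hpar]
        push_cast [nnnorm_mul]
        ring
      · intro v hv
        rw [hBf v]
        have : ¬ (t.par u = some v) := by
          intro h
          exact hv (Option.some_injective _ (h.symm.trans hpar))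
        simp [this]
    have hle : (‖μ w‖₊ : ℝ≥0∞) * (‖lam u‖₊ : ℝ≥0∞) ≤ C * (‖μ u‖₊ : ℝ≥0∞) := by
      have := hC f
      rw [h1, h2] at this
      exact this
    have hμu : (‖μ u‖₊ : ℝ≥0∞) ≠ 0 := by simp [hμ u]
    have := (ENNReal.div_le_iff_le_mul (Or.inl hμu)
      (Or.inl ENNReal.coe_ne_top)).mpr hle
    rw [div_eq_mul_inv, mul_assoc] at this
    exact this

end Aux

/-- the weighted backward shift `B_λ` is bounded on `ℓ¹(V,μ)` iff
`sup_{v ≠ root} |μ_{par(v)}| |λ_v / μ_v| < ∞`, and then this supremum is `‖B_λ‖`.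
(The `Option.elim` assigns the value `0` at the root, so the supremum over all `v`
is the supremum over `v ≠ root`.) -/
theorem stmt4 {V : Type*} [Countable V] {𝕂 : Type*} [RCLike 𝕂] (t : DirTree V)
    (lam μ : V → 𝕂) (hlam : ∀ v, lam v ≠ 0) (hμ : ∀ v, μ v ≠ 0) :
    (BoundedOn (t.bshift lam) (enormW μ 1) ↔
      (⨆ v : V, (t.par v).elim (0 : ℝ≥0∞)
          (fun w => (‖μ w‖₊ : ℝ≥0∞) * ((‖lam v‖₊ : ℝ≥0∞) * (‖μ v‖₊ : ℝ≥0∞)⁻¹))) ≠ ∞) ∧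
    (BoundedOn (t.bshift lam) (enormW μ 1) →
      opNorm (t.bshift lam) (enormW μ 1)
        = ⨆ v : V, (t.par v).elim (0 : ℝ≥0∞)
            (fun w => (‖μ w‖₊ : ℝ≥0∞) * ((‖lam v‖₊ : ℝ≥0∞) * (‖μ v‖₊ : ℝ≥0∞)⁻¹))) := by
  have hsup : (⨆ v : V, (t.par v).elim (0 : ℝ≥0∞)
      (fun w => (‖μ w‖₊ : ℝ≥0∞) * ((‖lam v‖₊ : ℝ≥0∞) * (‖μ v‖₊ : ℝ≥0∞)⁻¹)))
      = supM t lam μ := rfl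
  rw [hsup]
  constructor
  · constructor
    · rintro ⟨C, hCtop, hCf⟩
      exact ne_top_of_le_ne_top hCtop (bound_B t lam μ hμ C hCf)
    · intro h
      exact ⟨supM t lam μ, h, bound_A t lam μ hμ⟩
  · intro _
    apply le_antisymm
    · exact sInf_le (bound_A t lam μ hμ)
    · exact le_sInf fun C hC => bound_B t lam μ hμ C hC
end

section
/- Let (V,E) be a directed tree, λ and μ weights on V, and 1 < p < ∞ with conjugate exponent p*. The weighted backward shift B_λ is a bounded operator on ℓ^p(V,μ) if and only if sup_{v∈V} |μ_v|^{p*} ∑_{u∈Chi(v)} |λ_u/μ_u|^{p*} < ∞. In that case ‖B_λ‖ = sup_{v∈V} |μ_v| (∑_{u∈Chi(v)} |λ_u/μ_u|^{p*})^{1/p*}. -/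
open scoped ENNReal
open Filter

/-!
On the children of `v`, Hölder's inequality bounds `|μ_v (B_λ f)(v)|` by
`|μ_v| ‖λ/μ‖_{ℓ^{p*}(Chi v)} ‖μ f‖_{ℓ^p(Chi v)}`; the children sets of distinct vertices are
disjoint, so summing `p`-th powers over `v` gives `‖B_λ‖ ≤ sup_v |μ_v| ‖λ/μ‖_{ℓ^{p*}(Chi v)}`.
Conversely, testing `B_λ` on functions supported on finitely many children of `v`, with phases
aligned to `λ` and moduli from the equality case of Hölder's inequality, shows that each
`|μ_v| ‖λ/μ‖_{ℓ^{p*}(Chi v)}` is at most any bound of `B_λ`.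
-/

open scoped NNReal

namespace ENNReal

theorem inner_le_Lp_mul_Lq_tsum {ι : Type*} (f g : ι → ℝ≥0∞) {p q : ℝ}
    (hpq : p.HolderConjugate q) :
    ∑' i, f i * g i ≤ (∑' i, f i ^ p) ^ (1 / p) * (∑' i, g i ^ q) ^ (1 / q) := by
  have := hpq.pos
  have := hpq.symm.pos
  rw [ENNReal.tsum_eq_iSup_sum]
  refine iSup_le fun s => (inner_le_Lp_mul_Lq s f g hpq).trans ?_
  gcongr <;> exact ENNReal.sum_le_tsum s

theorem sum_rpow_le_rpow_of_forall_inner_le {ι : Type*} (s : Finset ι) {p q : ℝ}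
    (hpq : p.HolderConjugate q) {e : ι → ℝ≥0∞} (he : ∀ i ∈ s, e i ≠ ∞) {K : ℝ≥0∞}
    (h : ∀ a : ι → ℝ≥0, ∑ i ∈ s, e i * a i ≤ K * (∑ i ∈ s, (a i : ℝ≥0∞) ^ p) ^ (1 / p)) :
    ∑ i ∈ s, e i ^ q ≤ K ^ q := by
  set T := ∑ i ∈ s, e i ^ q
  have hq1 : 0 ≤ q - 1 := sub_nonneg.2 hpq.symm.lt.le
  have hT : T ≠ ∞ :=
    sum_ne_top.2 fun i hi => (rpow_lt_top_of_nonneg hpq.symm.nonneg (he i hi)).ne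
  -- Hölder is an equality for `a = e ^ (q - 1)`
  have hTT : T ≤ K * T ^ (1 / p) := by
    set a : ι → ℝ≥0 := fun i => (e i ^ (q - 1)).toNNReal
    have ha : ∀ i ∈ s, (a i : ℝ≥0∞) = e i ^ (q - 1) := fun i hi =>
      coe_toNNReal (rpow_lt_top_of_nonneg hq1 (he i hi)).ne
    have hea : ∑ i ∈ s, e i * a i = T := Finset.sum_congr rfl fun i hi => by
      rw [ha i hi]
      calc e i * e i ^ (q - 1) = e i ^ (1 + (q - 1)) := by
            rw [rpow_add_of_nonneg _ _ zero_le_one hq1, rpow_one]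
        _ = e i ^ q := by rw [add_sub_cancel]
    have hap : ∑ i ∈ s, (a i : ℝ≥0∞) ^ p = T := Finset.sum_congr rfl fun i hi => by
      rw [ha i hi, ← rpow_mul, hpq.symm.sub_one_mul_conj]
    simpa only [hea, hap] using h a
  rcases eq_or_ne T 0 with h0 | h0
  · simp [h0]
  have hsplit : T ^ (1 / p) * T ^ q⁻¹ = T := by
    rw [← rpow_add _ _ h0 hT, one_div, hpq.inv_add_inv_eq_one, rpow_one]
  have hTp : T ^ (1 / p) ≠ 0 := by simp [h0, hT, hpq.pos]
  have hTp' : T ^ (1 / p) ≠ ∞ := (rpow_lt_top_of_nonneg (by simp [hpq.nonneg]) hT).ne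
  rw [← rpow_inv_le_iff hpq.symm.pos, ← ENNReal.mul_le_mul_iff_right hTp hTp', hsplit, mul_comm]
  exact hTT

end ENNReal

theorem enormW_of_ne_top {V 𝕂 : Type*} [RCLike 𝕂] (μ : V → 𝕂) {p : ℝ≥0∞} (hp : p ≠ ∞)
    (f : V → 𝕂) :
    enormW μ p f = (∑' v, (‖μ v * f v‖₊ : ℝ≥0∞) ^ p.toReal) ^ (1 / p.toReal) :=
  if_neg hp

theorem nnnorm_mul_le_enormW {V 𝕂 : Type*} [RCLike 𝕂] (μ : V → 𝕂) {p : ℝ≥0∞} (hp0 : p ≠ 0)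
    (hp : p ≠ ∞) (f : V → 𝕂) (v : V) : (‖μ v * f v‖₊ : ℝ≥0∞) ≤ enormW μ p f := by
  rw [enormW_of_ne_top μ hp, one_div, ENNReal.le_rpow_inv_iff (ENNReal.toReal_pos hp0 hp)]
  exact ENNReal.le_tsum v

theorem enormW_eq_sum_of_support_subset {V 𝕂 : Type*} [RCLike 𝕂] (μ : V → 𝕂) {p : ℝ≥0∞}
    (hp0 : p ≠ 0) (hp : p ≠ ∞) {f : V → 𝕂} {s : Finset V} (hf : ∀ u ∉ s, f u = 0) :
    enormW μ p f = (∑ u ∈ s, (‖μ u * f u‖₊ : ℝ≥0∞) ^ p.toReal) ^ (1 / p.toReal) := by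
  rw [enormW_of_ne_top μ hp, tsum_eq_sum fun u hu => by
    simp [hf u hu, ENNReal.toReal_pos hp0 hp]]

namespace DirTree

variable {V : Type*} (t : DirTree V)

theorem tsum_tsum_children_le (g : V → ℝ≥0∞) : ∑' v, ∑' u : t.children v, g u ≤ ∑' u, g u := by
  classical
  simp_rw [tsum_subtype]
  rw [ENNReal.tsum_comm]
  refine ENNReal.tsum_le_tsum fun u => ?_
  cases h : t.par u with
  | none => simp [children, Set.indicator, h]
  | some w => simp [children, Set.indicator, h, eq_comm]

variable {𝕂 : Type*} [RCLike 𝕂]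

theorem bshift_apply_eq_sum (lam : V → 𝕂) {f : V → 𝕂} {v : V} {s : Finset V}
    (hs : ∀ u ∈ s, u ∈ t.children v) (hf : ∀ u ∉ s, f u = 0) :
    t.bshift lam f v = ∑ u ∈ s, lam u * f u := by
  rw [bshift, tsum_subtype_eq_of_support_subset (f := fun u => lam u * f u), tsum_eq_sum]
  · exact fun u hu => by simp [hf u hu]
  · exact fun u hu => hs u (by_contra fun h => hu (by simp [hf u h]))

noncomputable def childRatioSum (lam μ : V → 𝕂) (q : ℝ) (v : V) : ℝ≥0∞ :=
  ∑' u : t.children v, ((‖lam u.1‖₊ : ℝ≥0∞) * (‖μ u.1‖₊ : ℝ≥0∞)⁻¹) ^ q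

noncomputable def bshiftBound (lam μ : V → 𝕂) (q : ℝ) : ℝ≥0∞ :=
  ⨆ v, (‖μ v‖₊ : ℝ≥0∞) * t.childRatioSum lam μ q v ^ (1 / q)

variable {lam μ : V → 𝕂} {r q : ℝ}

theorem nnnorm_mul_bshift_apply_le (hμ : ∀ v, μ v ≠ 0) (hrq : r.HolderConjugate q)
    (f : V → 𝕂) (v : V) :
    (‖μ v * t.bshift lam f v‖₊ : ℝ≥0∞) ≤ ‖μ v‖₊ * t.childRatioSum lam μ q v ^ (1 / q) *
      (∑' u : t.children v, (‖μ u.1 * f u.1‖₊ : ℝ≥0∞) ^ r) ^ (1 / r) := by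
  have hterm (u : V) : (‖lam u * f u‖₊ : ℝ≥0∞) =
      (‖lam u‖₊ : ℝ≥0∞) * (‖μ u‖₊ : ℝ≥0∞)⁻¹ * ‖μ u * f u‖₊ := by
    have hμu : (‖μ u‖₊ : ℝ≥0∞) ≠ 0 := by simpa using hμ u
    rw [nnnorm_mul, nnnorm_mul, ENNReal.coe_mul, ENNReal.coe_mul, mul_assoc,
      ENNReal.inv_mul_cancel_left hμu ENNReal.coe_ne_top]
  rw [nnnorm_mul, ENNReal.coe_mul, mul_assoc]
  gcongr
  calc (‖t.bshift lam f v‖₊ : ℝ≥0∞)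
      ≤ ∑' u : t.children v, (‖lam u.1 * f u.1‖₊ : ℝ≥0∞) :=
        enorm_tsum_le_tsum_enorm (f := fun u : t.children v => lam u * f u)
    _ = ∑' u : t.children v, (‖lam u.1‖₊ : ℝ≥0∞) * (‖μ u.1‖₊ : ℝ≥0∞)⁻¹ * ‖μ u.1 * f u.1‖₊ := by
        simp only [hterm]
    _ ≤ _ := ENNReal.inner_le_Lp_mul_Lq_tsum _ _ hrq.symm

theorem enormW_bshift_le (hμ : ∀ v, μ v ≠ 0) {p : ℝ≥0∞} (hp : p ≠ ∞)
    (hpq : p.toReal.HolderConjugate q) (f : V → 𝕂) :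
    enormW μ p (t.bshift lam f) ≤ t.bshiftBound lam μ q * enormW μ p f := by
  set r := p.toReal
  set N := t.bshiftBound lam μ q
  set g : V → ℝ≥0∞ := fun u => (‖μ u * f u‖₊ : ℝ≥0∞) ^ r
  have hr := hpq.pos
  have hv (v : V) : (‖μ v * t.bshift lam f v‖₊ : ℝ≥0∞) ^ r ≤ N ^ r * ∑' u : t.children v, g u :=
    calc (‖μ v * t.bshift lam f v‖₊ : ℝ≥0∞) ^ r
        ≤ (N * (∑' u : t.children v, g u) ^ (1 / r)) ^ r := by
          gcongr
          refine (t.nnnorm_mul_bshift_apply_le hμ hpq f v).trans ?_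
          gcongr
          exact le_iSup (fun v => (‖μ v‖₊ : ℝ≥0∞) * t.childRatioSum lam μ q v ^ (1 / q)) v
      _ = N ^ r * ∑' u : t.children v, g u := by
          rw [ENNReal.mul_rpow_of_nonneg _ _ hr.le, ← ENNReal.rpow_mul, one_div_mul_cancel hr.ne',
            ENNReal.rpow_one]
  calc enormW μ p (t.bshift lam f) = (∑' v, (‖μ v * t.bshift lam f v‖₊ : ℝ≥0∞) ^ r) ^ (1 / r) :=
        enormW_of_ne_top μ hp _
    _ ≤ (N ^ r * ∑' u, g u) ^ (1 / r) := by
        gcongr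
        calc ∑' v, (‖μ v * t.bshift lam f v‖₊ : ℝ≥0∞) ^ r
            ≤ ∑' v, N ^ r * ∑' u : t.children v, g u := ENNReal.tsum_le_tsum hv
          _ = N ^ r * ∑' v, ∑' u : t.children v, g u := ENNReal.tsum_mul_left
          _ ≤ N ^ r * ∑' u, g u := by gcongr N ^ r * ?_; exact t.tsum_tsum_children_le g
    _ = N * enormW μ p f := by
        rw [enormW_of_ne_top μ hp, ENNReal.mul_rpow_of_nonneg _ _ (by positivity),
          ← ENNReal.rpow_mul, mul_one_div_cancel hr.ne', ENNReal.rpow_one]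

theorem nnnorm_mul_sum_le_of_enormW_bshift_le (hμ : ∀ v, μ v ≠ 0) {p : ℝ≥0∞} (hp0 : p ≠ 0)
    (hp : p ≠ ∞) {C : ℝ≥0∞} (hC : ∀ f, enormW μ p (t.bshift lam f) ≤ C * enormW μ p f)
    {v : V} {s : Finset V} (hs : ∀ u ∈ s, u ∈ t.children v) (a : V → ℝ≥0) :
    (‖μ v‖₊ : ℝ≥0∞) * ∑ u ∈ s, (‖lam u‖₊ : ℝ≥0∞) * (‖μ u‖₊ : ℝ≥0∞)⁻¹ * a u ≤
      C * (∑ u ∈ s, (a u : ℝ≥0∞) ^ p.toReal) ^ (1 / p.toReal) := by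
  classical
  -- the phases make every term `λ_u f(u)` of `(B_λ f)(v)` a nonnegative real
  set f : V → 𝕂 := fun u =>
    if u ∈ s then ((a u * ‖μ u‖⁻¹ * ‖lam u‖⁻¹ : ℝ) : 𝕂) * starRingEnd 𝕂 (lam u) else 0
  have hf : ∀ u ∉ s, f u = 0 := fun u hu => if_neg hu
  have hlamf : ∀ u ∈ s, lam u * f u = (((a u * (‖lam u‖₊ / ‖μ u‖₊) : ℝ≥0) : ℝ) : 𝕂) := by
    intro u hu
    rw [show f u = _ from if_pos hu, mul_left_comm, RCLike.mul_conj, ← RCLike.ofReal_pow,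
      ← RCLike.ofReal_mul]
    congr 1
    push_cast
    rcases eq_or_ne ‖lam u‖ 0 with h | h
    · simp [h]
    · field_simp
  have hμf : ∀ u ∈ s, ‖μ u * f u‖₊ ≤ a u := by
    intro u hu
    rw [← NNReal.coe_le_coe, coe_nnnorm, show f u = _ from if_pos hu, norm_mul, norm_mul,
      RCLike.norm_ofReal, RCLike.norm_conj, abs_of_nonneg (by positivity)]
    have hμu : ‖μ u‖ ≠ 0 := norm_ne_zero_iff.2 (hμ u)
    rcases eq_or_ne ‖lam u‖ 0 with h | h
    · simp [h]
    · exact le_of_eq (by field_simp)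
  calc (‖μ v‖₊ : ℝ≥0∞) * ∑ u ∈ s, (‖lam u‖₊ : ℝ≥0∞) * (‖μ u‖₊ : ℝ≥0∞)⁻¹ * a u
      = ‖μ v * t.bshift lam f v‖₊ := by
        rw [t.bshift_apply_eq_sum lam hs hf, Finset.sum_congr rfl hlamf, ← RCLike.ofReal_sum,
          ← NNReal.coe_sum, nnnorm_mul, show ∀ x : ℝ≥0, ‖((x : ℝ) : 𝕂)‖₊ = x from
            fun x => NNReal.eq (by simp)]
        push_cast
        refine congrArg _ (Finset.sum_congr rfl fun u _ => ?_)
        rw [ENNReal.coe_div (by simpa using hμ u), div_eq_mul_inv, mul_comm]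
    _ ≤ enormW μ p (t.bshift lam f) := nnnorm_mul_le_enormW μ hp0 hp _ v
    _ ≤ C * enormW μ p f := hC f
    _ ≤ C * (∑ u ∈ s, (a u : ℝ≥0∞) ^ p.toReal) ^ (1 / p.toReal) := by
        rw [enormW_eq_sum_of_support_subset μ hp0 hp hf]
        gcongr with u hu
        exact_mod_cast hμf u hu

theorem bshiftBound_le_of_enormW_bshift_le (hμ : ∀ v, μ v ≠ 0) {p : ℝ≥0∞} (hp : p ≠ ∞)
    (hpq : p.toReal.HolderConjugate q) {C : ℝ≥0∞}
    (hC : ∀ f, enormW μ p (t.bshift lam f) ≤ C * enormW μ p f) :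
    t.bshiftBound lam μ q ≤ C := by
  classical
  have hp0 : p ≠ 0 := by rintro rfl; exact hpq.ne_zero rfl
  refine iSup_le fun v => ?_
  have hμv : (‖μ v‖₊ : ℝ≥0∞) ≠ 0 := by simpa using hμ v
  rw [ENNReal.mul_le_iff_le_inv hμv ENNReal.coe_ne_top, one_div,
    ENNReal.rpow_inv_le_iff hpq.symm.pos, childRatioSum,
    tsum_subtype (t.children v) fun u => ((‖lam u‖₊ : ℝ≥0∞) * (‖μ u‖₊ : ℝ≥0∞)⁻¹) ^ q,
    ENNReal.tsum_eq_iSup_sum]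
  refine iSup_le fun s => ?_
  rw [Finset.sum_indicator_eq_sum_filter]
  refine ENNReal.sum_rpow_le_rpow_of_forall_inner_le _ hpq (fun u _ => ?_) fun a => ?_
  · exact ENNReal.mul_ne_top ENNReal.coe_ne_top (by simpa using hμ u)
  · rw [mul_assoc, ← ENNReal.mul_le_iff_le_inv hμv ENNReal.coe_ne_top]
    exact t.nnnorm_mul_sum_le_of_enormW_bshift_le hμ hp0 hp hC
      (fun u hu => (Finset.mem_filter.1 hu).2) a

theorem bshiftBound_rpow (hq : 0 < q) :
    t.bshiftBound lam μ q ^ q = ⨆ v, (‖μ v‖₊ : ℝ≥0∞) ^ q * t.childRatioSum lam μ q v := by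
  rw [bshiftBound]
  refine ((ENNReal.orderIsoRpow q hq).map_iSup _).trans (iSup_congr fun v => ?_)
  rw [ENNReal.orderIsoRpow_apply, ENNReal.mul_rpow_of_nonneg _ _ hq.le, ← ENNReal.rpow_mul,
    one_div_mul_cancel hq.ne', ENNReal.rpow_one]

theorem opNorm_bshift (hμ : ∀ v, μ v ≠ 0) {p : ℝ≥0∞} (hp : p ≠ ∞)
    (hpq : p.toReal.HolderConjugate q) :
    opNorm (t.bshift lam) (enormW μ p) = t.bshiftBound lam μ q :=
  le_antisymm (sInf_le (t.enormW_bshift_le hμ hp hpq))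
    (le_sInf fun _ hC => t.bshiftBound_le_of_enormW_bshift_le hμ hp hpq hC)

theorem boundedOn_bshift_iff (hμ : ∀ v, μ v ≠ 0) {p : ℝ≥0∞} (hp : p ≠ ∞)
    (hpq : p.toReal.HolderConjugate q) :
    BoundedOn (t.bshift lam) (enormW μ p) ↔ t.bshiftBound lam μ q ≠ ∞ :=
  ⟨fun ⟨_, hC, hbd⟩ =>
      ne_top_of_le_ne_top hC (t.bshiftBound_le_of_enormW_bshift_le hμ hp hpq hbd),
    fun h => ⟨_, h, t.enormW_bshift_le hμ hp hpq⟩⟩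

end DirTree

theorem stmt5_general {V : Type*} {𝕂 : Type*} [RCLike 𝕂] (t : DirTree V)
    (lam μ : V → 𝕂) (hμ : ∀ v, μ v ≠ 0)
    (p : ℝ≥0∞) (hp : 1 < p) (hp' : p ≠ ∞) (q : ℝ) (hpq : 1 / p.toReal + 1 / q = 1) :
    (BoundedOn (t.bshift lam) (enormW μ p) ↔
      (⨆ v : V, (‖μ v‖₊ : ℝ≥0∞) ^ q *
          ∑' u : t.children v, ((‖lam u.1‖₊ : ℝ≥0∞) * (‖μ u.1‖₊ : ℝ≥0∞)⁻¹) ^ q) ≠ ∞) ∧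
    (BoundedOn (t.bshift lam) (enormW μ p) →
      opNorm (t.bshift lam) (enormW μ p)
        = ⨆ v : V, (‖μ v‖₊ : ℝ≥0∞) *
            (∑' u : t.children v, ((‖lam u.1‖₊ : ℝ≥0∞) * (‖μ u.1‖₊ : ℝ≥0∞)⁻¹) ^ q)
              ^ (1 / q)) := by
  have hpq' : p.toReal.HolderConjugate q := Real.holderConjugate_iff.2
    ⟨by simpa using ENNReal.toReal_strict_mono hp' hp, by simpa only [one_div] using hpq⟩
  refine ⟨?_, fun _ => t.opNorm_bshift hμ hp' hpq'⟩
  rw [t.boundedOn_bshift_iff hμ hp' hpq', Ne, ← ENNReal.rpow_eq_top_iff_of_pos hpq'.symm.pos,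
    t.bshiftBound_rpow hpq'.symm.pos]
  rfl

/-- for `1 < p < ∞` with conjugate exponent `q = p*`, the weighted backward
shift `B_λ` is bounded on `ℓ^p(V,μ)` iff
`sup_v |μ_v|^{p*} ∑_{u ∈ Chi(v)} |λ_u/μ_u|^{p*} < ∞`; in that case
`‖B_λ‖ = sup_v |μ_v| (∑_{u ∈ Chi(v)} |λ_u/μ_u|^{p*})^{1/p*}`. -/
theorem stmt5 {V : Type*} [Countable V] {𝕂 : Type*} [RCLike 𝕂] (t : DirTree V)
    (lam μ : V → 𝕂) (hlam : ∀ v, lam v ≠ 0) (hμ : ∀ v, μ v ≠ 0)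
    (p : ℝ≥0∞) (hp : 1 < p) (hp' : p ≠ ∞) (q : ℝ) (hpq : 1 / p.toReal + 1 / q = 1) :
    (BoundedOn (t.bshift lam) (enormW μ p) ↔
      (⨆ v : V, (‖μ v‖₊ : ℝ≥0∞) ^ q *
          ∑' u : t.children v, ((‖lam u.1‖₊ : ℝ≥0∞) * (‖μ u.1‖₊ : ℝ≥0∞)⁻¹) ^ q) ≠ ∞) ∧
    (BoundedOn (t.bshift lam) (enormW μ p) →
      opNorm (t.bshift lam) (enormW μ p)
        = ⨆ v : V, (‖μ v‖₊ : ℝ≥0∞) *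
            (∑' u : t.children v, ((‖lam u.1‖₊ : ℝ≥0∞) * (‖μ u.1‖₊ : ℝ≥0∞)⁻¹) ^ q)
              ^ (1 / q)) :=
  stmt5_general t lam μ hμ p hp hp' q hpq
end

section
/- Let (V,E) be an unrooted directed tree having a vertex with at least two children. Then no weighted forward shift S_λ is hypercyclic on ℓ^p(V), 1 ≤ p < ∞, or on c₀(V). -/
open scoped ENNReal
open Filter

section Aux

variable {V : Type*} {𝕂 : Type*} [RCLike 𝕂]

/-- Pointwise lower bound for the `ℓ^p` norm, `p` finite. -/
lemma pt_le_lp (p : ℝ≥0∞) (hp : 1 ≤ p) (hp' : p ≠ ∞) (h : V → 𝕂) (u : V) :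
    (‖h u‖₊ : ℝ≥0∞) ≤ enormW (fun _ => (1 : 𝕂)) p h := by
  have hp0 : p ≠ 0 := by
    intro h0; rw [h0] at hp; simp at hp
  have hpt : 0 < p.toReal := ENNReal.toReal_pos hp0 hp'
  unfold enormW
  rw [if_neg hp']
  have h1 : (‖h u‖₊ : ℝ≥0∞) = ((‖h u‖₊ : ℝ≥0∞) ^ p.toReal) ^ (1 / p.toReal) := by
    rw [← ENNReal.rpow_mul, mul_one_div_cancel hpt.ne', ENNReal.rpow_one]
  rw [h1]
  apply ENNReal.rpow_le_rpow _ (by positivity)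
  have := ENNReal.le_tsum (f := fun v => (‖(1 : 𝕂) * h v‖₊ : ℝ≥0∞) ^ p.toReal) u
  simpa using this

/-- Pointwise lower bound for the sup norm. -/
lemma pt_le_sup (h : V → 𝕂) (u : V) :
    (‖h u‖₊ : ℝ≥0∞) ≤ enormW (fun _ => (1 : 𝕂)) ∞ h := by
  unfold enormW
  rw [if_pos rfl]
  have := le_iSup (fun v => (‖(1 : 𝕂) * h v‖₊ : ℝ≥0∞)) u
  simpa using this

/-- The key non-hypercyclicity lemma. -/
lemma key_not_hc (t : DirTree V) {v u₁ u₂ : V} (hne : u₁ ≠ u₂)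
    (h1 : t.par u₁ = some v) (h2 : t.par u₂ = some v)
    (lam : V → 𝕂) (hlam : ∀ w, lam w ≠ 0)
    (mem : (V → 𝕂) → Prop) (nrm : (V → 𝕂) → ℝ≥0∞)
    (hpt : ∀ h u, (‖h u‖₊ : ℝ≥0∞) ≤ nrm h)
    (hmem : ∀ a b : 𝕂, ∃ g : V → 𝕂, mem g ∧ g u₁ = a ∧ g u₂ = b) :
    ¬ HypercyclicOn (t.fshift lam) mem nrm := by
  rintro ⟨f, hf, hd⟩
  set a : 𝕂 := f u₁ + 2 with ha
  obtain ⟨g, hg, hg1, hg2⟩ := hmem a ((a - 1) * lam u₂ / lam u₁)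
  set ε₀ : ℝ := min 1 (‖lam u₂‖ / (‖lam u₁‖ + ‖lam u₂‖)) with hε₀
  have hl1 : (0:ℝ) < ‖lam u₁‖ := norm_pos_iff.mpr (hlam u₁)
  have hl2 : (0:ℝ) < ‖lam u₂‖ := norm_pos_iff.mpr (hlam u₂)
  have hden : (0:ℝ) < ‖lam u₁‖ + ‖lam u₂‖ := by linarith
  have hε₀pos : 0 < ε₀ := lt_min one_pos (div_pos hl2 hden)
  obtain ⟨n, hn⟩ := hd g hg (ENNReal.ofReal ε₀) (by simpa using hε₀pos)
  -- pointwise consequences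
  have hpw : ∀ u : V, ‖(t.fshift lam)^[n] f u - g u‖ < ε₀ := by
    intro u
    have := lt_of_le_of_lt (hpt ((t.fshift lam)^[n] f - g) u) hn
    have h2' : (‖((t.fshift lam)^[n] f - g) u‖₊ : ℝ≥0∞) < ENNReal.ofReal ε₀ := this
    rw [ENNReal.lt_ofReal_iff_toReal_lt ENNReal.coe_ne_top] at h2'
    simpa [Pi.sub_apply] using h2'
  cases n with
  | zero =>
      have := hpw u₁
      simp only [Function.iterate_zero, id_eq, hg1, ha] at this
      have h2 : ‖f u₁ - (f u₁ + 2)‖ = 2 := by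
        have : f u₁ - (f u₁ + 2) = -2 := by ring
        rw [this]; simp
      rw [h2] at this
      have : ε₀ ≤ 1 := min_le_left _ _
      linarith
  | succ m =>
      set h : V → 𝕂 := (t.fshift lam)^[m+1] f with hh
      have hform : h = t.fshift lam ((t.fshift lam)^[m] f) := by
        rw [hh, Function.iterate_succ_apply']
      set c : 𝕂 := (t.fshift lam)^[m] f v with hc
      have hu1 : h u₁ = lam u₁ * c := by
        rw [hform]; unfold DirTree.fshift; rw [h1]; rfl
      have hu2 : h u₂ = lam u₂ * c := by
        rw [hform]; unfold DirTree.fshift; rw [h2]; rfl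
      -- g u₁ * lam u₂ - g u₂ * lam u₁ = lam u₂
      have hgid : g u₁ * lam u₂ - g u₂ * lam u₁ = lam u₂ := by
        rw [hg1, hg2, div_mul_cancel₀ _ (hlam u₁)]; ring
      have hid : lam u₂ = (g u₁ - h u₁) * lam u₂ - (g u₂ - h u₂) * lam u₁ := by
        linear_combination (-1 : 𝕂) * hgid + lam u₂ * hu1 - lam u₁ * hu2
      have hb1 : ‖h u₁ - g u₁‖ < ε₀ := hpw u₁
      have hb2 : ‖h u₂ - g u₂‖ < ε₀ := hpw u₂
      have hbound : ‖lam u₂‖ < ε₀ * (‖lam u₁‖ + ‖lam u₂‖) := by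
        calc ‖lam u₂‖ = ‖(g u₁ - h u₁) * lam u₂ - (g u₂ - h u₂) * lam u₁‖ := by
              rw [← hid]
          _ ≤ ‖(g u₁ - h u₁) * lam u₂‖ + ‖(g u₂ - h u₂) * lam u₁‖ := norm_sub_le _ _
          _ = ‖g u₁ - h u₁‖ * ‖lam u₂‖ + ‖g u₂ - h u₂‖ * ‖lam u₁‖ := by
              rw [norm_mul, norm_mul]
          _ < ε₀ * ‖lam u₂‖ + ε₀ * ‖lam u₁‖ := by
              have e1 : ‖g u₁ - h u₁‖ < ε₀ := by rw [norm_sub_rev]; exact hb1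
              have e2 : ‖g u₂ - h u₂‖ < ε₀ := by rw [norm_sub_rev]; exact hb2
              have := mul_lt_mul_of_pos_right e1 hl2
              have := mul_lt_mul_of_pos_right e2 hl1
              nlinarith
          _ = ε₀ * (‖lam u₁‖ + ‖lam u₂‖) := by ring
      have hle : ε₀ ≤ ‖lam u₂‖ / (‖lam u₁‖ + ‖lam u₂‖) := min_le_right _ _
      have h3 : ε₀ * (‖lam u₁‖ + ‖lam u₂‖) ≤ ‖lam u₂‖ := by
        calc ε₀ * (‖lam u₁‖ + ‖lam u₂‖)
            ≤ ‖lam u₂‖ / (‖lam u₁‖ + ‖lam u₂‖) * (‖lam u₁‖ + ‖lam u₂‖) :=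
              mul_le_mul_of_nonneg_right hle hden.le
          _ = ‖lam u₂‖ := div_mul_cancel₀ _ hden.ne'
      linarith

end Aux

section Mem

variable {V : Type*} {𝕂 : Type*} [RCLike 𝕂]

lemma mem_lp_two [DecidableEq V] (p : ℝ≥0∞) (hp : 1 ≤ p) (hp' : p ≠ ∞)
    (u₁ u₂ : V) (a b : 𝕂) :
    MemWLp (fun _ => (1 : 𝕂)) p
      (fun w => if w = u₁ then a else if w = u₂ then b else 0) := by
  have hp0 : p ≠ 0 := by intro h0; rw [h0] at hp; simp at hp
  have hpt : 0 < p.toReal := ENNReal.toReal_pos hp0 hp'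
  unfold MemWLp enormW
  rw [if_neg hp']
  apply ENNReal.rpow_ne_top_of_nonneg (by positivity)
  have hsum : ∑' w, (‖(1 : 𝕂) * (if w = u₁ then a else if w = u₂ then b else 0)‖₊ : ℝ≥0∞) ^ p.toReal
      = ∑ w ∈ ({u₁, u₂} : Finset V),
        (‖(1 : 𝕂) * (if w = u₁ then a else if w = u₂ then b else 0)‖₊ : ℝ≥0∞) ^ p.toReal := by
    apply tsum_eq_sum
    intro w hw
    simp only [Finset.mem_insert, Finset.mem_singleton, not_or] at hw
    rw [if_neg hw.1, if_neg hw.2]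
    simp [ENNReal.zero_rpow_of_pos hpt]
  rw [hsum]
  refine (ENNReal.sum_lt_top.mpr fun w _ => ?_).ne
  exact ENNReal.rpow_lt_top_of_nonneg hpt.le ENNReal.coe_ne_top

lemma mem_c0_two [DecidableEq V] (u₁ u₂ : V) (a b : 𝕂) :
    MemC0 (fun _ => (1 : 𝕂))
      (fun w => if w = u₁ then a else if w = u₂ then b else 0) := by
  unfold MemC0
  have hev : (fun _ : V => (0 : ℝ)) =ᶠ[Filter.cofinite]
      (fun w => ‖(1 : 𝕂) * (if w = u₁ then a else if w = u₂ then b else 0)‖) := by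
    rw [Filter.eventuallyEq_iff_exists_mem]
    refine ⟨{u₁, u₂}ᶜ, ?_, ?_⟩
    · rw [Filter.mem_cofinite, compl_compl]
      exact (Set.finite_singleton u₂).insert u₁
    · intro w hw
      simp only [Set.mem_compl_iff, Set.mem_insert_iff, Set.mem_singleton_iff, not_or] at hw
      simp [hw.1, hw.2]
  exact Filter.Tendsto.congr' hev tendsto_const_nhds

end Mem

/-- on an unrooted directed tree having a vertex with at least two
children, no weighted forward shift `S_λ` is hypercyclic on `ℓ^p(V)`, `1 ≤ p < ∞`,
or on `c₀(V)`. -/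
theorem stmt9 {V : Type*} [Countable V] {𝕂 : Type*} [RCLike 𝕂] (t : DirTree V)
    (hur : t.Unrooted)
    (hbr : ∃ v u₁ u₂ : V, u₁ ≠ u₂ ∧ u₁ ∈ t.children v ∧ u₂ ∈ t.children v)
    (lam : V → 𝕂) (hlam : ∀ v, lam v ≠ 0) :
    (∀ p : ℝ≥0∞, 1 ≤ p → p ≠ ∞ →
      ¬ HypercyclicOn (t.fshift lam) (MemWLp (fun _ => (1 : 𝕂)) p)
          (enormW (fun _ => (1 : 𝕂)) p)) ∧
    ¬ HypercyclicOn (t.fshift lam) (MemC0 (fun _ => (1 : 𝕂)))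
        (enormW (fun _ => (1 : 𝕂)) ∞) := by
  classical
  obtain ⟨v, u₁, u₂, hne, hc1, hc2⟩ := hbr
  constructor
  · intro p hp hp'
    apply key_not_hc t hne hc1 hc2 lam hlam
    · exact fun h u => pt_le_lp p hp hp' h u
    · intro a b
      exact ⟨fun w => if w = u₁ then a else if w = u₂ then b else 0,
        mem_lp_two p hp hp' u₁ u₂ a b, by simp, by simp [hne.symm]⟩
  · apply key_not_hc t hne hc1 hc2 lam hlam
    · exact fun h u => pt_le_sup h u
    · intro a b
      exact ⟨fun w => if w = u₁ then a else if w = u₂ then b else 0,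
        mem_c0_two u₁ u₂ a b, by simp, by simp [hne.symm]⟩
end

section
/- Let X be a separable Banach space and T a bounded operator on X. Suppose there exist dense subsets X₀, Y₀ of X, an increasing sequence (n_k) of positive integers, and maps I_{n_k} : X₀ → X and R_{n_k} : Y₀ → X such that for all x ∈ X₀ and y ∈ Y₀: I_{n_k}x → x, T^{n_k}I_{n_k}x → 0, R_{n_k}y → 0, and T^{n_k}R_{n_k}y → y as k → ∞. Then T ⊕ T is topologically transitive (T is weakly mixing). If the hypotheses hold with (n_k) = (n), then T is mixing. -/
open scoped ENNReal
open Filter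

/-- a variant of the Hypercyclicity Criterion. If `X` is a separable
Banach space, `T` a bounded operator on `X`, `X₀, Y₀` dense subsets, `(n_k)` an
increasing sequence of positive integers, and `I_{n_k} : X₀ → X`, `R_{n_k} : Y₀ → X`
satisfy `I_{n_k}x → x`, `T^{n_k}I_{n_k}x → 0`, `R_{n_k}y → 0`, `T^{n_k}R_{n_k}y → y`,
then `T ⊕ T` is topologically transitive (`T` is weakly mixing); and if the hypotheses
hold for the full sequence `(n_k) = (n)`, then `T` is mixing. -/
theorem stmt11 {𝕜 X : Type*} [RCLike 𝕜] [NormedAddCommGroup X] [NormedSpace 𝕜 X]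
    [CompleteSpace X] [TopologicalSpace.SeparableSpace X]
    (T : X →L[𝕜] X) (X₀ Y₀ : Set X) (hX₀ : Dense X₀) (hY₀ : Dense Y₀)
    (n : ℕ → ℕ) (hmono : StrictMono n) (hpos : ∀ k, 0 < n k)
    (I R : ℕ → X → X)
    (hI : ∀ x ∈ X₀, Filter.Tendsto (fun k => I k x) Filter.atTop (nhds x))
    (hTI : ∀ x ∈ X₀,
      Filter.Tendsto (fun k => (T ^ n k) (I k x)) Filter.atTop (nhds 0))
    (hR : ∀ y ∈ Y₀, Filter.Tendsto (fun k => R k y) Filter.atTop (nhds 0))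
    (hTR : ∀ y ∈ Y₀,
      Filter.Tendsto (fun k => (T ^ n k) (R k y)) Filter.atTop (nhds y)) :
    (∀ U W : Set (X × X), IsOpen U → IsOpen W → U.Nonempty → W.Nonempty →
      ∃ m : ℕ, ((fun z : X × X => ((T ^ m) z.1, (T ^ m) z.2)) '' U ∩ W).Nonempty) ∧
    ((∀ k, n k = k + 1) →
      ∀ U W : Set X, IsOpen U → IsOpen W → U.Nonempty → W.Nonempty →
        ∃ N : ℕ, ∀ m ≥ N, ((T ^ m) '' U ∩ W).Nonempty) := by
  have key : ∀ U W : Set X, IsOpen U → IsOpen W → U.Nonempty → W.Nonempty →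
      ∀ᶠ k in atTop, ∃ x ∈ U, (T ^ n k) x ∈ W := by
    intro U W hU hW hUne hWne
    obtain ⟨u, huU, huX₀⟩ := hX₀.inter_open_nonempty U hU hUne
    obtain ⟨w, hwW, hwY₀⟩ := hY₀.inter_open_nonempty W hW hWne
    have h1 : Tendsto (fun k => I k u + R k w) atTop (nhds u) := by
      simpa using (hI u huX₀).add (hR w hwY₀)
    have h2 : Tendsto (fun k => (T ^ n k) (I k u + R k w)) atTop (nhds w) := by
      have := (hTI u huX₀).add (hTR w hwY₀)
      simp only [map_add]
      simpa using this
    filter_upwards [h1.eventually (hU.mem_nhds huU),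
      h2.eventually (hW.mem_nhds hwW)] with k hk1 hk2
    exact ⟨I k u + R k w, hk1, hk2⟩
  constructor
  · intro U W hU hW hUne hWne
    obtain ⟨u, huU⟩ := hUne
    obtain ⟨w, hwW⟩ := hWne
    obtain ⟨U1, U2, hU1, hU2, hu1, hu2, hUsub⟩ := isOpen_prod_iff.mp hU u.1 u.2 huU
    obtain ⟨W1, W2, hW1, hW2, hw1, hw2, hWsub⟩ := isOpen_prod_iff.mp hW w.1 w.2 hwW
    obtain ⟨k, hk1, hk2⟩ := ((key U1 W1 hU1 hW1 ⟨_, hu1⟩ ⟨_, hw1⟩).and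
      (key U2 W2 hU2 hW2 ⟨_, hu2⟩ ⟨_, hw2⟩)).exists
    obtain ⟨x1, hx1U, hx1W⟩ := hk1
    obtain ⟨x2, hx2U, hx2W⟩ := hk2
    exact ⟨n k, ⟨((T ^ n k) x1, (T ^ n k) x2),
      ⟨(x1, x2), hUsub ⟨hx1U, hx2U⟩, rfl⟩, hWsub ⟨hx1W, hx2W⟩⟩⟩
  · intro hn U W hU hW hUne hWne
    obtain ⟨N, hN⟩ := eventually_atTop.mp (key U W hU hW hUne hWne)
    refine ⟨N + 1, fun m hm => ?_⟩
    obtain ⟨x, hxU, hxW⟩ := hN (m - 1) (by omega)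
    rw [hn] at hxW
    have hm1 : m - 1 + 1 = m := by omega
    rw [hm1] at hxW
    exact ⟨(T ^ m) x, ⟨x, hxU, rfl⟩, hxW⟩
end

section
/- Let (V,E) be a rooted, leafless directed tree and μ a weight, and suppose the backward shift B is bounded on ℓ¹(V,μ). Then B is hypercyclic on ℓ¹(V,μ) if and only if there is an increasing sequence (n_k) of positive integers such that for every v ∈ V, inf_{u ∈ Chi^{n_k}(v)} |μ_u| → 0 as k → ∞; moreover this is equivalent to B being weakly mixing. -/
open scoped ENNReal
open Filter

/-!
Write `a n v = inf_{u ∈ Chi^n(v)} |μ_u|`. Since `B^n f (v) = ∑_{u ∈ Chi^n(v)} f u`, we have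
`a n v * |B^n f (v)| ≤ ‖f‖`, so an orbit passing close to a large constant on a finite set `s`
makes `a n v` small on `s`, and `|μ_v| ≤ ‖B‖^n a n v` forces such `n` to be large. Conversely, if
`a n` is frequently small on every finite set, a finitely supported `g` equals `B^n h` for
`h = ∑_v g v • e_{u_v}` with `u_v ∈ Chi^n(v)` of small weight, and since the tree is rooted,
`B^n` kills any finitely supported vector once `n` exceeds its depth. Summing such blocks, with
rapidly increasing `n`, against an enumeration of a countable dense set of pairs yields a vector
with dense orbit under `B ⊕ B`. "Frequently small on every finite set" says that `0` is a cluster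
point of `n ↦ a n` in `[0, ∞]^V`, which for countable `V` is the existence of a subsequence `n_k`
with `a n_k v → 0` for all `v`.
-/

open scoped ENNReal
open Filter Topology Function

section

variable {V : Type*}

theorem parIter_add (par : V → Option V) (m n : ℕ) (v : V) :
    parIter par (m + n) v = (parIter par m v).bind (parIter par n) := by
  induction m generalizing v with
  | zero => simp [parIter]
  | succ m ih =>
    rw [Nat.add_right_comm, parIter, parIter, Option.bind_assoc]
    simp only [ih]

theorem parIter_eq_none_of_le (par : V → Option V) {m n : ℕ} {v : V} (hmn : m ≤ n)
    (hm : parIter par m v = none) : parIter par n v = none := by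
  obtain ⟨k, rfl⟩ := Nat.exists_eq_add_of_le hmn
  rw [parIter_add, hm, Option.bind_none]

section WeightedL1

variable {𝕂 : Type*} [RCLike 𝕂] (μ : V → 𝕂)

noncomputable def wL1Norm (f : V → 𝕂) : ℝ≥0∞ := ∑' v, ‖μ v * f v‖ₑ

theorem enormW_one_s12 (f : V → 𝕂) : enormW μ 1 f = wL1Norm μ f := by
  simp [enormW, wL1Norm, enorm_eq_nnnorm]

theorem enorm_mul_enorm_le_wL1Norm (f : V → 𝕂) (v : V) : ‖μ v‖ₑ * ‖f v‖ₑ ≤ wL1Norm μ f := by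
  rw [← enorm_mul]
  exact ENNReal.le_tsum v

theorem wL1Norm_add_le (f g : V → 𝕂) : wL1Norm μ (f + g) ≤ wL1Norm μ f + wL1Norm μ g := by
  rw [wL1Norm, wL1Norm, wL1Norm, ← ENNReal.tsum_add]
  exact ENNReal.tsum_le_tsum fun v => by simpa only [Pi.add_apply, mul_add] using enorm_add_le _ _

theorem wL1Norm_sub_le (f g h : V → 𝕂) :
    wL1Norm μ (f - h) ≤ wL1Norm μ (f - g) + wL1Norm μ (g - h) := by
  simpa using wL1Norm_add_le μ (f - g) (g - h)

theorem wL1Norm_finset_sum_le {ι : Type*} (s : Finset ι) (f : ι → V → 𝕂) :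
    wL1Norm μ (∑ i ∈ s, f i) ≤ ∑ i ∈ s, wL1Norm μ (f i) :=
  Finset.le_sum_of_subadditive _ (by simp [wL1Norm]) (wL1Norm_add_le μ) s f

theorem wL1Norm_tsum_le {ι : Type*} (f : ι → V → 𝕂) :
    wL1Norm μ (fun v => ∑' i, f i v) ≤ ∑' i, wL1Norm μ (f i) := by
  simp only [wL1Norm]
  rw [ENNReal.tsum_comm]
  refine ENNReal.tsum_le_tsum fun v => ?_
  rw [← tsum_mul_left]
  exact enorm_tsum_le_tsum_enorm

theorem wL1Norm_single [DecidableEq V] (u : V) (c : 𝕂) :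
    wL1Norm μ (Pi.single u c) = ‖μ u‖ₑ * ‖c‖ₑ := by
  rw [wL1Norm, tsum_eq_single u fun v hv => by simp [hv], Pi.single_eq_same, enorm_mul]

theorem wL1Norm_ne_top_of_finite {f : V → 𝕂} (hf : (support f).Finite) : wL1Norm μ f ≠ ∞ := by
  rw [wL1Norm, tsum_eq_sum (s := hf.toFinset) fun v hv => by simp_all]
  exact ENNReal.sum_ne_top.2 fun _ _ => enorm_ne_top

theorem summable_apply_of_tsum_wL1Norm_ne_top (hμ : ∀ v, μ v ≠ 0) {ι : Type*} {f : ι → V → 𝕂}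
    (hf : ∑' i, wL1Norm μ (f i) ≠ ∞) (v : V) : Summable fun i => f i v := by
  refine Summable.of_enorm (ne_top_of_le_ne_top (b := (∑' i, wL1Norm μ (f i)) / ‖μ v‖ₑ)
    (ENNReal.div_ne_top hf (enorm_ne_zero.2 (hμ v))) ?_)
  rw [div_eq_mul_inv, ← ENNReal.tsum_mul_right]
  refine ENNReal.tsum_le_tsum fun i => ?_
  rw [← div_eq_mul_inv, ENNReal.le_div_iff_mul_le (.inl (enorm_ne_zero.2 (hμ v)))
    (.inl enorm_ne_top), mul_comm]
  exact enorm_mul_enorm_le_wL1Norm μ (f i) v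

end WeightedL1

theorem ENNReal.tsum_inv_two_pow_add_succ (j : ℕ) :
    ∑' l, (2⁻¹ : ℝ≥0∞) ^ (l + (j + 1)) = 2⁻¹ ^ j := by
  simp only [pow_add, ENNReal.tsum_mul_right, ENNReal.tsum_geometric_two, pow_succ,
    mul_comm (2 : ℝ≥0∞), mul_assoc, ENNReal.inv_mul_cancel two_ne_zero ENNReal.ofNat_ne_top,
    mul_one]

section Density

variable {𝕂 : Type*} [RCLike 𝕂]

theorem exists_finite_support_wL1Norm_sub_lt (μ : V → 𝕂) {S : Set 𝕂} (hS : Dense S)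
    (h0 : (0 : 𝕂) ∈ S) {g : V → 𝕂} (hg : wL1Norm μ g ≠ ∞) {ε : ℝ≥0∞} (hε : 0 < ε) :
    ∃ p : V → 𝕂, (support p).Finite ∧ (∀ v, p v ∈ S) ∧ wL1Norm μ (p - g) < ε := by
  classical
  obtain ⟨s, hs⟩ := ((ENNReal.tendsto_tsum_compl_atTop_zero hg).eventually_lt_const
    (ENNReal.half_pos hε.ne')).exists
  have hθ : 0 < ε / 2 / (s.card + 1) := ENNReal.div_pos (ENNReal.half_pos hε.ne').ne' (by simp)
  have hc (v : V) : ∃ c ∈ S, ‖μ v * (c - g v)‖ₑ < ε / 2 / (s.card + 1) :=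
    hS.exists_mem_open (isOpen_lt (continuous_const.mul (continuous_id.sub continuous_const)).enorm
      continuous_const) (⟨g v, by simpa using hθ⟩ :
        {c : 𝕂 | ‖μ v * (c - g v)‖ₑ < ε / 2 / (s.card + 1)}.Nonempty)
  choose c hcS hc using hc
  refine ⟨fun v => if v ∈ s then c v else 0, s.finite_toSet.subset fun v hv => by_contra fun h =>
    hv (if_neg h), fun v => by by_cases hv : v ∈ s <;> simp [hv, hcS, h0], ?_⟩
  rw [wL1Norm, ← ENNReal.sum_add_tsum_compl s]
  refine ENNReal.add_lt_add_of_le_of_lt (ENNReal.sum_ne_top.2 fun _ _ => enorm_ne_top) ?_ ?_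
    |>.trans_eq (ENNReal.add_halves ε)
  · calc ∑ v ∈ s, ‖μ v * ((fun v => if v ∈ s then c v else 0) - g) v‖ₑ
        ≤ ∑ _v ∈ s, ε / 2 / (s.card + 1) :=
          Finset.sum_le_sum fun v hv => by simpa [hv] using (hc v).le
      _ ≤ (s.card + 1) * (ε / 2 / (s.card + 1)) := by
          rw [Finset.sum_const, nsmul_eq_mul]
          gcongr
          exact le_self_add
      _ = ε / 2 := ENNReal.mul_div_cancel (by simp) (by simp)
  · refine lt_of_eq_of_lt (tsum_congr fun v => ?_) hs
    have hv : (v : V) ∉ s := v.2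
    simp [hv]

theorem countable_setOf_finite_support {S : Set 𝕂} (hS : S.Countable) [Countable V] :
    {p : V → 𝕂 | (support p).Finite ∧ ∀ v, p v ∈ S}.Countable := by
  classical
  have := hS.to_subtype
  refine (Set.countable_iUnion fun s : Finset V =>
    Set.countable_range fun c : s → S => fun v => if h : v ∈ s then (c ⟨v, h⟩ : 𝕂) else 0).mono ?_
  rintro p ⟨hp, hpS⟩
  refine Set.mem_iUnion.2 ⟨hp.toFinset, fun v => ⟨p v, hpS v⟩, funext fun v => ?_⟩
  by_cases hv : v ∈ hp.toFinset
  · simp [hv]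
  · dsimp only
    rw [dif_neg hv]
    exact (not_not.1 (hp.mem_toFinset.not.1 hv)).symm

end Density

theorem exists_seq_frequently_eq (α : Type*) [Countable α] [Nonempty α] :
    ∃ σ : ℕ → α, ∀ a, ∃ᶠ j in atTop, σ j = a := by
  obtain ⟨e, he⟩ := exists_surjective_nat α
  refine ⟨fun j => e (Nat.unpair j).1, fun a => ?_⟩
  obtain ⟨k, rfl⟩ := he a
  exact frequently_atTop.2 fun J => ⟨Nat.pair k J, Nat.right_le_pair k J, by simp⟩

theorem mapClusterPt_zero_iff_frequently_forall_lt (a : ℕ → V → ℝ≥0∞) :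
    MapClusterPt 0 atTop a ↔ ∀ s : Finset V, ∀ θ > 0, ∃ᶠ m in atTop, ∀ v ∈ s, a m v < θ := by
  constructor
  · refine fun h s θ hθ => mapClusterPt_iff_frequently.1 h {x | ∀ v ∈ s, x v < θ} ?_
    refine IsOpen.mem_nhds ?_ fun v _ => hθ
    simp only [Set.ofPred_forall]
    exact isOpen_biInter_finset fun v _ => isOpen_lt (continuous_apply v) continuous_const
  · intro h
    have hbasis := Filter.hasBasis_pi fun _ : V => ENNReal.nhds_zero_basis
    rw [← nhds_pi] at hbasis
    show MapClusterPt (fun _ => 0) atTop a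
    rw [hbasis.mapClusterPt_iff_frequently]
    rintro ⟨I, θ⟩ ⟨hI, hθ⟩
    refine (h hI.toFinset (hI.toFinset.inf θ) ((Finset.lt_inf_iff ENNReal.zero_lt_top).2
      fun v hv => hθ v (hI.mem_toFinset.1 hv))).mono fun m hm v hv => ?_
    exact (hm v (hI.mem_toFinset.2 hv)).trans_le (Finset.inf_le (hI.mem_toFinset.2 hv))

theorem exists_strictMono_tendsto_iff_mapClusterPt [Countable V] (a : ℕ → V → ℝ≥0∞) :
    (∃ n : ℕ → ℕ, StrictMono n ∧ (∀ k, 0 < n k) ∧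
      ∀ v, Tendsto (fun k => a (n k) v) atTop (𝓝 0)) ↔ MapClusterPt 0 atTop a := by
  constructor
  · rintro ⟨n, hn, -, hlim⟩
    exact (tendsto_pi_nhds.2 hlim).mapClusterPt.of_comp hn.tendsto_atTop
  · intro h
    obtain ⟨ψ, hψ, hlim⟩ := h.tendsto_subseq
    refine ⟨fun k => ψ (k + 1), hψ.comp (strictMono_id.add_const 1),
      fun k => (Nat.zero_le _).trans_lt (hψ (Nat.lt_succ_self k)), fun v => ?_⟩
    exact ((continuous_apply v).tendsto _).comp (hlim.comp (tendsto_add_atTop_nat 1))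

theorem WeaklyMixingOn.hypercyclicOn {𝕂 : Type*} [RCLike 𝕂] {T : (V → 𝕂) → V → 𝕂}
    {mem : (V → 𝕂) → Prop} {nrm : (V → 𝕂) → ℝ≥0∞} (h : WeaklyMixingOn T mem nrm) :
    HypercyclicOn T mem nrm := by
  obtain ⟨f, _, hf, _, hdense⟩ := h
  exact ⟨f, hf, fun g hg ε hε => (hdense g g hg hg ε hε).imp fun _ => And.left⟩

namespace DirTree

variable (t : DirTree V)

theorem exists_parIter_eq_none (hroot : t.Rooted) (u : V) : ∃ d, parIter t.par d u = none := by
  obtain ⟨r, hr⟩ := hroot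
  obtain ⟨m, n, w, hu, hr'⟩ := t.connected u r
  cases n with
  | zero =>
    obtain rfl : r = w := Option.some_inj.1 hr'
    exact ⟨m + 1, by rw [parIter_add, hu]; simp [parIter, show t.par r = none from hr]⟩
  | succ n => simp [parIter, show t.par r = none from hr] at hr'

theorem exists_forall_parIter_eq_none (hroot : t.Rooted) (s : Finset V) :
    ∃ K, ∀ m ≥ K, ∀ u ∈ s, parIter t.par m u = none := by
  choose d hd using t.exists_parIter_eq_none hroot
  exact ⟨s.sup d, fun m hm u hu =>
    parIter_eq_none_of_le t.par ((Finset.le_sup hu).trans hm) (hd u)⟩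

variable {𝕂 : Type*} [RCLike 𝕂]

theorem bshift_one_apply (f : V → 𝕂) (v : V) : t.bshift 1 f v = ∑' u : t.children v, f u := by
  simp [bshift]

theorem bshift_single [DecidableEq V] {u w : V} (h : t.par u = some w) (c : 𝕂) :
    t.bshift 1 (Pi.single u c) = Pi.single w c := by
  ext x
  rw [bshift_one_apply]
  by_cases hx : x = w
  · subst hx
    rw [tsum_eq_single ⟨u, h⟩ fun y hy => by
      rw [Pi.single_apply, if_neg fun e => hy (Subtype.ext e)]]
    simp
  · have hy (y : t.children x) : (Pi.single u c : V → 𝕂) y = 0 := by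
      rw [Pi.single_apply, if_neg fun e => hx (Option.some_inj.1 ?_)]
      rw [← h, ← e]
      exact y.2.symm
    simp [hy, hx]

theorem iterate_bshift_single [DecidableEq V] {n : ℕ} {u v : V} (h : u ∈ t.desc n v) (c : 𝕂) :
    (t.bshift 1)^[n] (Pi.single u c) = Pi.single v c := by
  induction n generalizing u with
  | zero => obtain rfl : u = v := Option.some_inj.1 h; rfl
  | succ n ih =>
    obtain ⟨w, hw, hwv⟩ := Option.bind_eq_some_iff.1 h
    rw [iterate_succ_apply, t.bshift_single hw, ih hwv]

noncomputable def descInf (μ : V → 𝕂) (n : ℕ) (v : V) : ℝ≥0∞ := ⨅ u : t.desc n v, ‖μ u‖ₑ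

theorem descInf_mul_tsum_le (μ f : V → 𝕂) (n : ℕ) (v : V) :
    t.descInf μ n v * ∑' u : t.desc n v, ‖f u‖ₑ ≤ wL1Norm μ f := by
  rw [← ENNReal.tsum_mul_left]
  calc ∑' u : t.desc n v, t.descInf μ n v * ‖f u‖ₑ ≤ ∑' u : t.desc n v, ‖μ u * f u‖ₑ :=
        ENNReal.tsum_le_tsum fun u => by rw [enorm_mul]; gcongr; exact iInf_le _ u
    _ ≤ wL1Norm μ f := ENNReal.tsum_comp_le_tsum_of_injective Subtype.val_injective _

noncomputable def descSuccEquiv (n : ℕ) (v : V) :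
    (Σ w : t.desc n v, t.children w) ≃ t.desc (n + 1) v :=
  Equiv.ofBijective (fun p => ⟨p.2, Option.bind_eq_some_iff.2 ⟨p.1, p.2.2, p.1.2⟩⟩) <| by
    constructor
    · rintro ⟨⟨w, hw⟩, ⟨u, hu⟩⟩ ⟨⟨w', hw'⟩, ⟨u', hu'⟩⟩ h
      obtain rfl : u = u' := congrArg Subtype.val h
      obtain rfl : w = w' := Option.some_inj.1 (hu.symm.trans hu')
      rfl
    · rintro ⟨u, hu⟩
      obtain ⟨w, hw, hwv⟩ := Option.bind_eq_some_iff.1 hu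
      exact ⟨⟨⟨w, hwv⟩, ⟨u, hw⟩⟩, rfl⟩

section Bounded

variable {t} {μ : V → 𝕂} {C : ℝ≥0∞}
  (hB : ∀ f : V → 𝕂, wL1Norm μ (t.bshift 1 f) ≤ C * wL1Norm μ f)
include hB

theorem wL1Norm_iterate_bshift_le (n : ℕ) (f : V → 𝕂) :
    wL1Norm μ ((t.bshift 1)^[n] f) ≤ C ^ n * wL1Norm μ f := by
  induction n with
  | zero => simp
  | succ n ih =>
    rw [iterate_succ_apply', pow_succ', mul_assoc]
    exact (hB _).trans (by gcongr)

theorem enorm_le_pow_mul_of_mem_desc {n : ℕ} {u v : V} (h : u ∈ t.desc n v) :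
    ‖μ v‖ₑ ≤ C ^ n * ‖μ u‖ₑ := by
  classical
  simpa [wL1Norm_single, t.iterate_bshift_single h] using
    wL1Norm_iterate_bshift_le hB n (Pi.single u (1 : 𝕂))

theorem enorm_div_pow_le_descInf (n : ℕ) (v : V) : ‖μ v‖ₑ / C ^ n ≤ t.descInf μ n v :=
  le_iInf fun u => ENNReal.div_le_of_le_mul' (enorm_le_pow_mul_of_mem_desc hB u.2)

variable (hμ : ∀ v, μ v ≠ 0) (hC : C ≠ ∞)
include hμ hC

theorem descInf_ne_zero (n : ℕ) (v : V) : t.descInf μ n v ≠ 0 :=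
  ne_bot_of_le_ne_bot (ENNReal.div_ne_zero.2 ⟨enorm_ne_zero.2 (hμ v), ENNReal.pow_ne_top hC⟩)
    (enorm_div_pow_le_descInf hB n v)

theorem summable_desc {f : V → 𝕂} (hf : wL1Norm μ f ≠ ∞) (n : ℕ) (v : V) :
    Summable fun u : t.desc n v => f u := by
  refine Summable.of_enorm fun htop => hf (top_le_iff.1 ?_)
  simpa [htop, ENNReal.mul_top (descInf_ne_zero hB hμ hC n v)] using
    t.descInf_mul_tsum_le μ f n v

theorem iterate_bshift_apply {f : V → 𝕂} (hf : wL1Norm μ f ≠ ∞) (n : ℕ) (v : V) :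
    (t.bshift 1)^[n] f v = ∑' u : t.desc n v, f u := by
  induction n generalizing f with
  | zero =>
    refine (tsum_eq_single (f := fun u : t.desc 0 v => f u) ⟨v, rfl⟩
      fun u hu => absurd (Subtype.ext ?_) hu).symm
    exact Option.some_inj.1 u.2
  | succ n ih =>
    rw [iterate_succ_apply, ih (ne_top_of_le_ne_top (ENNReal.mul_ne_top hC hf) (hB f))]
    have hsum := (t.descSuccEquiv n v).summable_iff.2 (summable_desc hB hμ hC hf (n + 1) v)
    simp_rw [bshift_one_apply]
    exact hsum.tsum_sigma.symm.trans ((t.descSuccEquiv n v).tsum_eq fun u => f u)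

theorem iterate_bshift_add {f g : V → 𝕂} (hf : wL1Norm μ f ≠ ∞) (hg : wL1Norm μ g ≠ ∞) (n : ℕ) :
    (t.bshift 1)^[n] (f + g) = (t.bshift 1)^[n] f + (t.bshift 1)^[n] g := by
  have hfg := ne_top_of_le_ne_top (ENNReal.add_ne_top.2 ⟨hf, hg⟩) (wL1Norm_add_le μ f g)
  ext v
  rw [Pi.add_apply, iterate_bshift_apply hB hμ hC hfg, iterate_bshift_apply hB hμ hC hf,
    iterate_bshift_apply hB hμ hC hg]
  exact (summable_desc hB hμ hC hf n v).tsum_add (summable_desc hB hμ hC hg n v)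

theorem iterate_bshift_finset_sum {ι : Type*} {s : Finset ι} {f : ι → V → 𝕂}
    (hf : ∀ i ∈ s, wL1Norm μ (f i) ≠ ∞) (n : ℕ) :
    (t.bshift 1)^[n] (∑ i ∈ s, f i) = ∑ i ∈ s, (t.bshift 1)^[n] (f i) := by
  have hsum := ne_top_of_le_ne_top (ENNReal.sum_ne_top.2 hf) (wL1Norm_finset_sum_le μ s f)
  ext v
  simp only [Finset.sum_apply, iterate_bshift_apply hB hμ hC hsum]
  rw [Summable.tsum_finsetSum fun i hi => summable_desc hB hμ hC (hf i hi) n v]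
  exact Finset.sum_congr rfl fun i hi => (iterate_bshift_apply hB hμ hC (hf i hi) n v).symm

theorem iterate_bshift_eq_zero {f : V → 𝕂} (hf : wL1Norm μ f ≠ ∞) {n : ℕ}
    (h : ∀ u, f u ≠ 0 → parIter t.par n u = none) : (t.bshift 1)^[n] f = 0 := by
  ext v
  rw [iterate_bshift_apply hB hμ hC hf, Pi.zero_apply]
  have hu (u : t.desc n v) : f u = 0 := by
    by_contra hu
    have hv : parIter t.par n u = some v := u.2
    simp [h u hu] at hv
  simp [hu]

theorem exists_iterate_bshift_eq_zero (hroot : t.Rooted) (s : Finset V) :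
    ∃ K, ∀ n ≥ K, ∀ f : V → 𝕂, support f ⊆ s → (t.bshift 1)^[n] f = 0 := by
  obtain ⟨K, hK⟩ := t.exists_forall_parIter_eq_none hroot s
  exact ⟨K, fun n hn f hf => iterate_bshift_eq_zero hB hμ hC
    (wL1Norm_ne_top_of_finite μ (s.finite_toSet.subset hf)) fun u hu => hK n hn u (hf hu)⟩

theorem iterate_bshift_sum_single [DecidableEq V] {n : ℕ} {s : Finset V} {U : V → V}
    (hU : ∀ v ∈ s, U v ∈ t.desc n v) {g : V → 𝕂} (hg : support g ⊆ s) :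
    (t.bshift 1)^[n] (∑ v ∈ s, Pi.single (U v) (g v)) = g := by
  rw [iterate_bshift_finset_sum hB hμ hC fun v _ => by
      simpa [wL1Norm_single] using ENNReal.mul_ne_top enorm_ne_top enorm_ne_top,
    Finset.sum_congr rfl fun v hv => t.iterate_bshift_single (hU v hv) (g v)]
  ext x
  rw [Finset.sum_apply, Finset.sum_pi_single, ite_eq_left_iff]
  exact fun hx => by_contra fun h => hx (hg (Ne.symm h))

theorem exists_forall_descInf_lt {f : V → 𝕂} (hf : wL1Norm μ f ≠ ∞)
    (hdense : ∀ g, wL1Norm μ g ≠ ∞ → ∀ ε > 0, ∃ n, wL1Norm μ ((t.bshift 1)^[n] f - g) < ε)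
    (s : Finset V) {θ : ℝ≥0∞} (hθ : 0 < θ) : ∃ n, ∀ v ∈ s, t.descInf μ n v < θ := by
  classical
  have hf2 : 2 * wL1Norm μ f ≠ ∞ := ENNReal.mul_ne_top (by simp) hf
  obtain ⟨c, hc⟩ := ENNReal.exists_nat_gt (ENNReal.div_ne_top hf2 hθ.ne')
  have hc0 : (c : ℝ≥0∞) ≠ 0 := (pos_of_gt hc).ne'
  have hnorm_c : ‖(c : 𝕂)‖ₑ = c := by simp [enorm_eq_nnnorm]
  set b := s.inf fun v => ‖μ v‖ₑ
  have hb : 0 < b := (Finset.lt_inf_iff ENNReal.zero_lt_top).2 fun v _ => enorm_pos.2 (hμ v)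
  set g : V → 𝕂 := fun v => if v ∈ s then (c : 𝕂) else 0
  have hg : wL1Norm μ g ≠ ∞ :=
    wL1Norm_ne_top_of_finite μ (s.finite_toSet.subset fun v hv => by_contra fun h => hv (if_neg h))
  obtain ⟨n, hn⟩ := hdense g hg (b * (c / 2)) (ENNReal.mul_pos hb.ne' (by simpa using hc0))
  refine ⟨n, fun v hv => ?_⟩
  set x := (t.bshift 1)^[n] f v
  have hclose : ‖x - c‖ₑ < c / 2 := by
    refine (ENNReal.mul_lt_mul_iff_right (enorm_ne_zero.2 (hμ v)) enorm_ne_top).1 ?_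
    calc ‖μ v‖ₑ * ‖x - c‖ₑ ≤ wL1Norm μ ((t.bshift 1)^[n] f - g) := by
          simpa [g, hv, x] using enorm_mul_enorm_le_wL1Norm μ ((t.bshift 1)^[n] f - g) v
      _ < b * (c / 2) := hn
      _ ≤ ‖μ v‖ₑ * (c / 2) := by gcongr; exact Finset.inf_le hv
  have hlarge : (c : ℝ≥0∞) / 2 ≤ ‖x‖ₑ := by
    by_contra! hx
    have := enorm_sub_le (a := x) (b := x - c)
    rw [sub_sub_cancel, hnorm_c] at this
    exact this.not_gt ((ENNReal.add_lt_add hx hclose).trans_eq (ENNReal.add_halves _))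
  have hinf : t.descInf μ n v * ‖x‖ₑ ≤ wL1Norm μ f := by
    rw [show x = _ from iterate_bshift_apply hB hμ hC hf n v]
    grw [enorm_tsum_le_tsum_enorm]
    exact t.descInf_mul_tsum_le μ f n v
  refine (ENNReal.mul_lt_mul_iff_right hc0 (ENNReal.natCast_ne_top c)).1 ?_
  calc (c : ℝ≥0∞) * t.descInf μ n v = 2 * (t.descInf μ n v * (c / 2)) := by
        rw [mul_comm (c : ℝ≥0∞), mul_left_comm,
          ENNReal.mul_div_cancel two_ne_zero ENNReal.ofNat_ne_top]
    _ ≤ 2 * wL1Norm μ f := by grw [hlarge, hinf]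
    _ < c * θ := (ENNReal.div_lt_iff (.inl hθ.ne') (.inr hf2)).1 hc

theorem mapClusterPt_descInf (hC1 : 1 ≤ C) (hroot : t.Rooted)
    (hhc : HypercyclicOn (t.bshift 1) (MemWLp μ 1) (enormW μ 1)) :
    MapClusterPt 0 atTop (t.descInf μ) := by
  classical
  obtain ⟨f, hf, hdense⟩ := hhc
  simp only [MemWLp, enormW_one_s12] at hf hdense
  obtain ⟨r, -⟩ := hroot
  refine (mapClusterPt_zero_iff_frequently_forall_lt _).2 fun s θ hθ =>
    frequently_atTop.2 fun N => ?_
  have hθ' : 0 < min θ (‖μ r‖ₑ / C ^ N) :=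
    lt_min hθ (ENNReal.div_pos (enorm_ne_zero.2 (hμ r)) (ENNReal.pow_ne_top hC))
  obtain ⟨n, hn⟩ := exists_forall_descInf_lt hB hμ hC hf hdense (insert r s) hθ'
  refine ⟨n, ?_, fun v hv => (hn v (Finset.mem_insert_of_mem hv)).trans_le (min_le_left _ _)⟩
  by_contra! hnN
  refine (hn r (Finset.mem_insert_self r s)).not_ge ((min_le_right _ _).trans ?_)
  calc ‖μ r‖ₑ / C ^ N ≤ ‖μ r‖ₑ / C ^ n := by gcongr
    _ ≤ t.descInf μ n r := enorm_div_pow_le_descInf hB n r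

theorem wL1Norm_iterate_bshift_tsum_sub_le {m : ℕ → ℕ} {h G : ℕ → V → 𝕂}
    (hG : ∀ j, (t.bshift 1)^[m j] (h j) = G j)
    (hkill : ∀ j k, k < j → (t.bshift 1)^[m j] (h k) = 0)
    (hsmall : ∀ j, wL1Norm μ (h j) ≤ 2⁻¹ ^ j)
    (htail : ∀ j k, k < j → C ^ m k * wL1Norm μ (h j) ≤ 2⁻¹ ^ j) (j : ℕ) :
    wL1Norm μ ((t.bshift 1)^[m j] (fun v => ∑' i, h i v) - G j) ≤ 2⁻¹ ^ j := by
  have hsum : ∑' i, wL1Norm μ (h i) ≠ ∞ :=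
    ne_top_of_le_ne_top (by simp) (ENNReal.tsum_le_tsum hsmall)
  have hh (i : ℕ) : wL1Norm μ (h i) ≠ ∞ := ne_top_of_le_ne_top hsum (ENNReal.le_tsum i)
  set T : V → 𝕂 := fun v => ∑' l, h (l + (j + 1)) v
  have hsplit : (fun v => ∑' i, h i v) = ∑ i ∈ Finset.range (j + 1), h i + T := by
    ext v
    rw [Pi.add_apply, Finset.sum_apply,
      (summable_apply_of_tsum_wL1Norm_ne_top μ hμ hsum v).sum_add_tsum_nat_add]
  have hT : wL1Norm μ T ≤ ∑' l, wL1Norm μ (h (l + (j + 1))) := wL1Norm_tsum_le μ _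
  have hT' : wL1Norm μ T ≠ ∞ := ne_top_of_le_ne_top hsum
    (hT.trans (ENNReal.tsum_comp_le_tsum_of_injective (add_left_injective _) _))
  have hP := ne_top_of_le_ne_top (ENNReal.sum_ne_top.2 fun i _ => hh i)
    (wL1Norm_finset_sum_le μ (Finset.range (j + 1)) h)
  rw [hsplit, iterate_bshift_add hB hμ hC hP hT',
    iterate_bshift_finset_sum hB hμ hC fun i _ => hh i,
    Finset.sum_range_succ, hG, Finset.sum_eq_zero fun k hk => hkill j k (Finset.mem_range.1 hk),
    zero_add, add_sub_cancel_left]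
  calc wL1Norm μ ((t.bshift 1)^[m j] T) ≤ C ^ m j * ∑' l, wL1Norm μ (h (l + (j + 1))) :=
        (wL1Norm_iterate_bshift_le hB _ T).trans (by gcongr)
    _ ≤ ∑' l, (2⁻¹ : ℝ≥0∞) ^ (l + (j + 1)) := by
        rw [← ENNReal.tsum_mul_left]
        exact ENNReal.tsum_le_tsum fun l => htail _ j (by omega)
    _ = 2⁻¹ ^ j := ENNReal.tsum_inv_two_pow_add_succ j

theorem exists_iterate_bshift_eq_of_mapClusterPt (hroot : t.Rooted)
    (hclus : MapClusterPt 0 atTop (t.descInf μ))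
    {ι : Type*} [Fintype ι] {g : ι → V → 𝕂} (hg : ∀ i, (support (g i)).Finite) (N : ℕ)
    {δ : ℝ≥0∞} (hδ : 0 < δ) :
    ∃ n > N, ∃ h : ι → V → 𝕂, ∃ K, ∀ i, (t.bshift 1)^[n] (h i) = g i ∧
      wL1Norm μ (h i) ≤ δ ∧ ∀ k ≥ K, (t.bshift 1)^[k] (h i) = 0 := by
  classical
  set s := Finset.univ.biUnion fun i => (hg i).toFinset
  have hgs (i : ι) : support (g i) ⊆ s := fun v hv => by simpa [s] using ⟨i, hv⟩
  set A := ∑ i, ∑ v ∈ s, ‖g i v‖ₑ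
  have hA : A ≠ ∞ := ENNReal.sum_ne_top.2 fun i _ => ENNReal.sum_ne_top.2 fun v _ => enorm_ne_top
  have hA1 : A + 1 ≠ ∞ := ENNReal.add_ne_top.2 ⟨hA, ENNReal.one_ne_top⟩
  have hθ : 0 < δ / (A + 1) := ENNReal.div_pos hδ.ne' hA1
  obtain ⟨n, hn, hnN⟩ := ((mapClusterPt_zero_iff_frequently_forall_lt _).1 hclus s _ hθ
    |>.and_eventually (eventually_gt_atTop N)).exists
  have hU (v : V) (hv : v ∈ s) : ∃ u ∈ t.desc n v, ‖μ u‖ₑ < δ / (A + 1) := by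
    simpa [descInf, iInf_lt_iff] using hn v hv
  choose! U hU hUμ using hU
  obtain ⟨K, hK⟩ := exists_iterate_bshift_eq_zero hB hμ hC hroot (s.image U)
  refine ⟨n, hnN, fun i => ∑ v ∈ s, Pi.single (U v) (g i v), K, fun i =>
    ⟨iterate_bshift_sum_single hB hμ hC hU (hgs i), ?_, fun k hk => hK k hk _ ?_⟩⟩
  · calc wL1Norm μ (∑ v ∈ s, Pi.single (U v) (g i v))
        ≤ ∑ v ∈ s, δ / (A + 1) * ‖g i v‖ₑ := by
          refine (wL1Norm_finset_sum_le μ s _).trans (Finset.sum_le_sum fun v hv => ?_)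
          rw [wL1Norm_single]
          gcongr
          exact (hUμ v hv).le
      _ ≤ δ / (A + 1) * (A + 1) := by
          rw [← Finset.mul_sum]
          gcongr
          exact (Finset.single_le_sum (f := fun i => ∑ v ∈ s, ‖g i v‖ₑ) (fun _ _ => bot_le)
            (Finset.mem_univ i)).trans le_self_add
      _ = δ := ENNReal.div_mul_cancel (by simp) hA1
  · intro u hu
    by_contra hus
    refine hu ?_
    simp only [Finset.sum_apply, Pi.single_apply]
    refine Finset.sum_eq_zero fun v hv => if_neg fun e => hus ?_
    rw [e, Finset.coe_image]
    exact Set.mem_image_of_mem U hv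

theorem exists_seq_iterate_bshift_eq (hC1 : 1 ≤ C) (hroot : t.Rooted)
    (hclus : MapClusterPt 0 atTop (t.descInf μ))
    {ι : Type*} [Fintype ι] {g : ℕ → ι → V → 𝕂} (hg : ∀ j i, (support (g j i)).Finite) :
    ∃ (m : ℕ → ℕ) (h : ℕ → ι → V → 𝕂), (∀ j i, (t.bshift 1)^[m j] (h j i) = g j i) ∧
      (∀ j k i, k < j → (t.bshift 1)^[m j] (h k i) = 0) ∧
      (∀ j i, wL1Norm μ (h j i) ≤ 2⁻¹ ^ j) ∧
      (∀ j k i, k < j → C ^ m k * wL1Norm μ (h j i) ≤ 2⁻¹ ^ j) := by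
  choose n hnN h K hh using fun (j : ℕ) (st : ℕ × ℕ) =>
    exists_iterate_bshift_eq_of_mapClusterPt hB hμ hC hroot hclus (hg j) (max st.1 st.2)
      (δ := 2⁻¹ ^ j / C ^ st.1) (ENNReal.div_pos (by simp) (ENNReal.pow_ne_top hC))
  -- The state after step `j` is the exponent `m j` together with a threshold beyond which the
  -- iterates of all blocks built so far vanish.
  let st : ℕ → ℕ × ℕ := fun j => Nat.rec (0, 0) (fun j p => (n j p, max p.2 (K j p))) j
  have hst (j : ℕ) : st (j + 1) = (n j (st j), max (st j).2 (K j (st j))) := rfl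
  have hmono₁ : Monotone fun j => (st j).1 := monotone_nat_of_le_succ fun j => by
    rw [hst]; exact (le_max_left _ _).trans (hnN j _).le
  have hmono₂ : Monotone fun j => (st j).2 := monotone_nat_of_le_succ fun j => by
    rw [hst]; exact le_max_left _ _
  refine ⟨fun j => n j (st j), fun j => h j (st j), fun j i => (hh j _ i).1,
    fun j k i hkj => (hh k _ i).2.2 _ ?_, fun j i => (hh j _ i).2.1.trans ?_, fun j k i hkj => ?_⟩
  · calc K k (st k) ≤ (st (k + 1)).2 := by rw [hst]; exact le_max_right _ _
      _ ≤ (st j).2 := hmono₂ hkj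
      _ ≤ n j (st j) := (le_max_right _ _).trans (hnN j _).le
  · exact ENNReal.div_le_of_le_mul (le_mul_of_one_le_right' (one_le_pow₀ hC1))
  · calc C ^ n k (st k) * wL1Norm μ (h j (st j) i)
        ≤ C ^ (st j).1 * (2⁻¹ ^ j / C ^ (st j).1) := by
          gcongr
          exacts [hmono₁ hkj, (hh j _ i).2.1]
      _ = 2⁻¹ ^ j :=
          ENNReal.mul_div_cancel (pow_ne_zero _ (one_pos.trans_le hC1).ne') (ENNReal.pow_ne_top hC)

theorem exists_forall_wL1Norm_iterate_bshift_sub_lt [Countable V] (hC1 : 1 ≤ C)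
    (hroot : t.Rooted)
    (hclus : MapClusterPt 0 atTop (t.descInf μ))
    (ι : Type*) [Fintype ι] :
    ∃ F : ι → V → 𝕂, (∀ i, wL1Norm μ (F i) ≠ ∞) ∧ ∀ g : ι → V → 𝕂, (∀ i, wL1Norm μ (g i) ≠ ∞) →
      ∀ ε > 0, ∃ n, ∀ i, wL1Norm μ ((t.bshift 1)^[n] (F i) - g i) < ε := by
  obtain ⟨S, hSc, hS⟩ := TopologicalSpace.exists_countable_dense 𝕂
  set D := {p : V → 𝕂 | (support p).Finite ∧ ∀ v, p v ∈ insert 0 S}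
  have : Countable D := (countable_setOf_finite_support (hSc.insert 0)).to_subtype
  have : Nonempty (ι → D) := ⟨fun _ => ⟨0, by simp [D]⟩⟩
  obtain ⟨σ, hσ⟩ := exists_seq_frequently_eq (ι → D)
  obtain ⟨m, h, hG, hkill, hsmall, htail⟩ := exists_seq_iterate_bshift_eq hB hμ hC hC1 hroot hclus
    (g := fun j i => (σ j i : V → 𝕂)) fun j i => (σ j i).2.1
  refine ⟨fun i v => ∑' j, h j i v, fun i => ne_top_of_le_ne_top (by simp)
    ((wL1Norm_tsum_le μ _).trans (ENNReal.tsum_le_tsum fun j => hsmall j i)), fun g hg ε hε => ?_⟩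
  have hp (i : ι) : ∃ p ∈ D, wL1Norm μ (p - g i) < ε / 2 := by
    obtain ⟨p, hp, hpS, hpg⟩ := exists_finite_support_wL1Norm_sub_lt μ
      (hS.mono (Set.subset_insert 0 S)) (Set.mem_insert 0 S) (hg i) (ENNReal.half_pos hε.ne')
    exact ⟨p, ⟨hp, hpS⟩, hpg⟩
  choose p hpD hp using hp
  obtain ⟨j, hj, hjε⟩ := ((hσ fun i => ⟨p i, hpD i⟩).and_eventually
    ((ENNReal.tendsto_pow_atTop_nhds_zero_of_lt_one (ENNReal.inv_lt_one.2 ENNReal.one_lt_two))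
      |>.eventually_lt_const (ENNReal.half_pos hε.ne'))).exists
  refine ⟨m j, fun i => ?_⟩
  have hseries := wL1Norm_iterate_bshift_tsum_sub_le hB hμ hC (h := fun j => h j i)
    (fun j => hG j i) (fun j k => hkill j k i) (fun j => hsmall j i) (fun j k => htail j k i) j
  rw [hj] at hseries
  calc wL1Norm μ ((t.bshift 1)^[m j] (fun v => ∑' j, h j i v) - g i)
      ≤ wL1Norm μ ((t.bshift 1)^[m j] (fun v => ∑' j, h j i v) - p i) + wL1Norm μ (p i - g i) :=
        wL1Norm_sub_le μ _ _ _
    _ < ε / 2 + ε / 2 := ENNReal.add_lt_add (hseries.trans_lt hjε) (hp i)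
    _ = ε := ENNReal.add_halves ε

theorem weaklyMixingOn_bshift [Countable V] (hC1 : 1 ≤ C) (hroot : t.Rooted)
    (hclus : MapClusterPt 0 atTop (t.descInf μ)) :
    WeaklyMixingOn (t.bshift 1) (MemWLp μ 1) (enormW μ 1) := by
  obtain ⟨F, hF, hdense⟩ :=
    exists_forall_wL1Norm_iterate_bshift_sub_lt hB hμ hC hC1 hroot hclus Bool
  simp only [WeaklyMixingOn, MemWLp, enormW_one_s12]
  refine ⟨F true, F false, hF true, hF false, fun g₁ g₂ hg₁ hg₂ ε hε => ?_⟩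
  obtain ⟨n, hn⟩ := hdense (fun b => bif b then g₁ else g₂) (by simp [hg₁, hg₂]) ε hε
  exact ⟨n, hn true, hn false⟩

end Bounded

end DirTree

end

theorem stmt12_general {V : Type*} [Countable V] {𝕂 : Type*} [RCLike 𝕂] (t : DirTree V)
    (hroot : t.Rooted)
    (μ : V → 𝕂) (hμ : ∀ v, μ v ≠ 0)
    (hbd : BoundedOn (t.bshift (fun _ => (1 : 𝕂))) (enormW μ 1)) :
    (HypercyclicOn (t.bshift (fun _ => (1 : 𝕂))) (MemWLp μ 1) (enormW μ 1) ↔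
      ∃ n : ℕ → ℕ, StrictMono n ∧ (∀ k, 0 < n k) ∧ ∀ v : V,
        Filter.Tendsto (fun k => ⨅ u : t.desc (n k) v, (‖μ u.1‖₊ : ℝ≥0∞))
          Filter.atTop (nhds 0)) ∧
    (HypercyclicOn (t.bshift (fun _ => (1 : 𝕂))) (MemWLp μ 1) (enormW μ 1) ↔
      WeaklyMixingOn (t.bshift (fun _ => (1 : 𝕂))) (MemWLp μ 1) (enormW μ 1)) := by
  obtain ⟨C₀, hC₀, hB₀⟩ := hbd
  have hB (f : V → 𝕂) : wL1Norm μ (t.bshift 1 f) ≤ max C₀ 1 * wL1Norm μ f := by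
    grw [← le_max_left C₀ 1, ← enormW_one_s12, ← enormW_one_s12]
    exact hB₀ f
  have hC : max C₀ 1 ≠ ∞ := max_ne_top hC₀ ENNReal.one_ne_top
  have hC1 : 1 ≤ max C₀ 1 := le_max_right C₀ 1
  have hcond := exists_strictMono_tendsto_iff_mapClusterPt (t.descInf μ)
  have hwm := DirTree.weaklyMixingOn_bshift hB hμ hC hC1 hroot
  have hhc := DirTree.mapClusterPt_descInf hB hμ hC hC1 hroot
  exact ⟨⟨fun h => hcond.2 (hhc h), fun h => (hwm (hcond.1 h)).hypercyclicOn⟩,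
    ⟨fun h => hwm (hhc h), WeaklyMixingOn.hypercyclicOn⟩⟩

/-- for a rooted leafless directed tree and the unweighted backward
shift `B` bounded on `ℓ¹(V,μ)`: `B` is hypercyclic iff there is an increasing sequence
`(n_k)` of positive integers with `inf_{u ∈ Chi^{n_k}(v)} |μ_u| → 0` for every `v`;
moreover hypercyclicity is equivalent to weak mixing. -/
theorem stmt12 {V : Type*} [Countable V] {𝕂 : Type*} [RCLike 𝕂] (t : DirTree V)
    (hroot : t.Rooted) (hleafless : t.Leafless)
    (μ : V → 𝕂) (hμ : ∀ v, μ v ≠ 0)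
    (hbd : BoundedOn (t.bshift (fun _ => (1 : 𝕂))) (enormW μ 1)) :
    (HypercyclicOn (t.bshift (fun _ => (1 : 𝕂))) (MemWLp μ 1) (enormW μ 1) ↔
      ∃ n : ℕ → ℕ, StrictMono n ∧ (∀ k, 0 < n k) ∧ ∀ v : V,
        Filter.Tendsto (fun k => ⨅ u : t.desc (n k) v, (‖μ u.1‖₊ : ℝ≥0∞))
          Filter.atTop (nhds 0)) ∧
    (HypercyclicOn (t.bshift (fun _ => (1 : 𝕂))) (MemWLp μ 1) (enormW μ 1) ↔
      WeaklyMixingOn (t.bshift (fun _ => (1 : 𝕂))) (MemWLp μ 1) (enormW μ 1)) :=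
  stmt12_general t hroot μ hμ hbd
end
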